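/- arXiv:2406.16399 — 2 statements merged into one kernel-verified Lean document; each statement's English description precedes it below -/
import Mathlib

section
/- If ρ is a permutation of the form ρ = nα for some nonempty permutation α of {1,...,n-1} (i.e., ρ starts with its maximum), then PSB^{-1}(Av(ρ)) = Av(B), where B = {n(n+1)α} ∪ {(n+2)n τ : τ is a shuffle of the one-element sequence (n+1) with α, and τ ≠ (n+1)α}. -/
/-- `π` is a permutation of `{1,…,n}`, encoded as the list of its values. -/
def IsPermList (n : ℕ) (π : List ℕ) : Prop := π.Perm (List.range' 1 n)

/-- The pattern `σ` occurs in `π`: some subsequence of `π` is order-isomorphic to `σ`. -/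
def Contains (π σ : List ℕ) : Prop :=
  ∃ τ : List ℕ, τ.Sublist π ∧ τ.length = σ.length ∧
    ∀ i j : ℕ, i < τ.length → j < τ.length → (τ[i]! < τ[j]! ↔ σ[i]! < σ[j]!)

/-- `π` avoids the pattern `σ`. -/
def Avoids (π σ : List ℕ) : Prop := ¬ Contains π σ

/-- The pop stack with bypass sorting procedure (algorithm PSB); the second
argument is the pop stack, stored top-first.  Push if the stack is empty or the
current element is `TOP - 1`; bypass if it is `< TOP - 1`; otherwise pop the
whole stack and push.  At the end the stack is popped. -/
def psbAux : List ℕ → List ℕ → List ℕ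
  | [], s => s
  | x :: xs, [] => psbAux xs [x]
  | x :: xs, t :: s =>
      if x + 1 = t then psbAux xs (x :: t :: s)
      else if x + 1 < t then x :: psbAux xs (t :: s)
      else (t :: s) ++ psbAux xs [x]

/-- The map associated with the PSB algorithm. -/
def psb (π : List ℕ) : List ℕ := psbAux π []

/-- `τ` is a shuffle of `ρ` and `σ`: it contains both as subsequences and no
other elements. -/
def IsShuffle (ρ σ τ : List ℕ) : Prop :=
  ρ.Sublist τ ∧ σ.Sublist τ ∧ τ.Perm (ρ ++ σ)

open List

/-! ### getElem! helpers -/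

lemma gx (l : List ℕ) (i : ℕ) (h : i < l.length) : l[i]! = l[i] := getElem!_pos l i h

lemma gx_mem (l : List ℕ) (i : ℕ) (h : i < l.length) : l[i]! ∈ l := by
  rw [gx l i h]; exact l.getElem_mem h

lemma gx_nil (i : ℕ) : ([] : List ℕ)[i]! = 0 := by
  cases i <;> rfl

lemma gx_app (A B : List ℕ) (i : ℕ) :
    (A ++ B)[i]! = if i < A.length then A[i]! else B[i - A.length]! := by
  induction A generalizing i with
  | nil => simp
  | cons a A ih =>
    cases i with
    | zero => simp
    | succ i =>
      simp only [List.cons_append, List.getElem!_cons_succ, ih, List.length_cons]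
      by_cases h : i < A.length
      · simp [h, Nat.succ_lt_succ h]
      · have : ¬ (i + 1 < A.length + 1) := by omega
        rw [if_neg h, if_neg this]
        congr 1
        omega

lemma gx_mid (A B : List ℕ) (x : ℕ) (i : ℕ) :
    (A ++ x :: B)[i]! =
      if i < A.length then A[i]! else if i = A.length then x else B[i - A.length - 1]! := by
  rw [gx_app]
  by_cases h : i < A.length
  · simp [h]
  · have : i - A.length = 0 ∨ ∃ j, i - A.length = j + 1 := by
      rcases Nat.eq_zero_or_pos (i - A.length) with h'|h'
      · exact Or.inl h'
      · exact Or.inr ⟨i - A.length - 1, by omega⟩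
    rcases this with h'|⟨j, hj⟩
    · have : i = A.length := by omega
      simp [h, this]
    · have hne : ¬ i = A.length := by omega
      have hj' : i - A.length - 1 = j := by omega
      rw [if_neg h, if_neg h, if_neg hne, hj', hj, List.getElem!_cons_succ]

/-! ### Pattern lemmas -/

def Pat (τ σ : List ℕ) : Prop :=
  τ.length = σ.length ∧
    ∀ i j : ℕ, i < τ.length → j < τ.length → (τ[i]! < τ[j]! ↔ σ[i]! < σ[j]!)

lemma contains_iff {π σ : List ℕ} : Contains π σ ↔ ∃ τ, τ.Sublist π ∧ Pat τ σ := by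
  unfold Contains Pat
  constructor
  · rintro ⟨τ, h1, h2, h3⟩; exact ⟨τ, h1, h2, h3⟩
  · rintro ⟨τ, h1, h2, h3⟩; exact ⟨τ, h1, h2, h3⟩

lemma pat_length {τ σ : List ℕ} (h : Pat τ σ) : τ.length = σ.length := h.1

lemma pat_cons_iff {a b : ℕ} {l1 l2 : List ℕ} (hlen : l1.length = l2.length) :
    Pat (a :: l1) (b :: l2) ↔
      (Pat l1 l2 ∧ ∀ i, i < l1.length → ((l1[i]! < a ↔ l2[i]! < b) ∧ (a < l1[i]! ↔ b < l2[i]!))) := by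
  constructor
  · rintro ⟨h1, h2⟩
    refine ⟨⟨hlen, fun i j hi hj => ?_⟩, fun i hi => ⟨?_, ?_⟩⟩
    · have := h2 (i+1) (j+1) (by simpa using Nat.succ_lt_succ hi) (by simpa using Nat.succ_lt_succ hj)
      simpa using this
    · have := h2 (i+1) 0 (by simpa using Nat.succ_lt_succ hi) (by simp)
      simpa using this
    · have := h2 0 (i+1) (by simp) (by simpa using Nat.succ_lt_succ hi)
      simpa using this
  · rintro ⟨⟨h1, h2⟩, h3⟩
    refine ⟨by simp [hlen], fun i j hi hj => ?_⟩
    simp only [List.length_cons] at hi hj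
    match i, j with
    | 0, 0 => simp
    | 0, j+1 =>
      have := (h3 j (by omega)).2
      simpa using this
    | i+1, 0 =>
      have := (h3 i (by omega)).1
      simpa using this
    | i+1, j+1 =>
      have := h2 i j (by omega) (by omega)
      simpa using this

lemma pat_cons_max {a b : ℕ} {l1 l2 : List ℕ} (hlen : l1.length = l2.length)
    (h1 : ∀ x ∈ l1, x < a) (h2 : ∀ y ∈ l2, y < b) (hp : Pat l1 l2) :
    Pat (a :: l1) (b :: l2) := by
  rw [pat_cons_iff hlen]
  refine ⟨hp, fun i hi => ?_⟩
  have m1 := h1 _ (gx_mem l1 i hi)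
  have m2 := h2 _ (gx_mem l2 i (by omega))
  constructor
  · exact ⟨fun _ => m2, fun _ => m1⟩
  · constructor
    · intro h; omega
    · intro h; omega

lemma pat_cons_max_elim {a b : ℕ} {l1 l2 : List ℕ}
    (hp : Pat (a :: l1) (b :: l2)) (h2 : ∀ y ∈ l2, y < b) :
    Pat l1 l2 ∧ ∀ x ∈ l1, x < a := by
  have hlen : l1.length = l2.length := by
    have := hp.1; simpa using this
  rw [pat_cons_iff hlen] at hp
  refine ⟨hp.1, fun x hx => ?_⟩
  obtain ⟨i, hi, rfl⟩ := List.mem_iff_getElem.mp hx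
  rw [← gx l1 i hi]
  have := (hp.2 i hi).1
  have m2 := h2 _ (gx_mem l2 i (by omega))
  omega

lemma pat_mid_iff {l1 l2 r1 r2 : List ℕ} {v w : ℕ}
    (hL : l1.length = r1.length) (hR : l2.length = r2.length) :
    Pat (l1 ++ v :: l2) (r1 ++ w :: r2) ↔
      (Pat (l1 ++ l2) (r1 ++ r2) ∧
        ∀ i, i < l1.length + l2.length →
          (((l1 ++ l2)[i]! < v ↔ (r1 ++ r2)[i]! < w) ∧
           (v < (l1 ++ l2)[i]! ↔ w < (r1 ++ r2)[i]!))) := by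
  have len1 : (l1 ++ v :: l2).length = l1.length + l2.length + 1 := by simp; omega
  have eL1 : ∀ i, i < l1.length → (l1 ++ v :: l2)[i]! = (l1 ++ l2)[i]! := by
    intro i h; rw [gx_mid, gx_app, if_pos h, if_pos h]
  have eL2 : ∀ i, l1.length < i → (l1 ++ v :: l2)[i]! = (l1 ++ l2)[i-1]! := by
    intro i h
    rw [gx_mid, gx_app, if_neg (by omega), if_neg (by omega), if_neg (by omega)]
    congr 1; omega
  have eR1 : ∀ i, i < l1.length → (r1 ++ w :: r2)[i]! = (r1 ++ r2)[i]! := by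
    intro i h; rw [gx_mid, gx_app, if_pos (by omega), if_pos (by omega)]
  have eR2 : ∀ i, l1.length < i → (r1 ++ w :: r2)[i]! = (r1 ++ r2)[i-1]! := by
    intro i h
    rw [gx_mid, gx_app, if_neg (by omega), if_neg (by omega), if_neg (by omega)]
    congr 1; omega
  have eLv : (l1 ++ v :: l2)[l1.length]! = v := by
    rw [gx_mid, if_neg (by omega), if_pos rfl]
  have eRw : (r1 ++ w :: r2)[l1.length]! = w := by
    rw [gx_mid, if_neg (by omega), if_pos (by omega)]
  constructor
  · rintro ⟨hlen, hp⟩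
    refine ⟨⟨by simp [hL, hR], fun i j hi hj => ?_⟩, fun i hi => ⟨?_, ?_⟩⟩
    · simp only [List.length_append] at hi hj
      by_cases h1 : i < l1.length <;> by_cases h2 : j < l1.length
      · have H := hp i j (by omega) (by omega)
        rwa [eL1 i h1, eL1 j h2, eR1 i h1, eR1 j h2] at H
      · have H := hp i (j+1) (by omega) (by omega)
        rwa [eL1 i h1, eL2 (j+1) (by omega), eR1 i h1, eR2 (j+1) (by omega),
          Nat.add_sub_cancel] at H
      · have H := hp (i+1) j (by omega) (by omega)
        rwa [eL2 (i+1) (by omega), eL1 j h2, eR2 (i+1) (by omega), eR1 j h2,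
          Nat.add_sub_cancel] at H
      · have H := hp (i+1) (j+1) (by omega) (by omega)
        rwa [eL2 (i+1) (by omega), eL2 (j+1) (by omega), eR2 (i+1) (by omega),
          eR2 (j+1) (by omega), Nat.add_sub_cancel] at H
    · by_cases h1 : i < l1.length
      · have H := hp i l1.length (by omega) (by omega)
        rwa [eL1 i h1, eR1 i h1, eLv, eRw] at H
      · have H := hp (i+1) l1.length (by omega) (by omega)
        rwa [eL2 (i+1) (by omega), eR2 (i+1) (by omega), eLv, eRw, Nat.add_sub_cancel] at H
    · by_cases h1 : i < l1.length
      · have H := hp l1.length i (by omega) (by omega)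
        rwa [eL1 i h1, eR1 i h1, eLv, eRw] at H
      · have H := hp l1.length (i+1) (by omega) (by omega)
        rwa [eL2 (i+1) (by omega), eR2 (i+1) (by omega), eLv, eRw, Nat.add_sub_cancel] at H
  · rintro ⟨⟨hlen, hp⟩, hpt⟩
    refine ⟨by simp [hL, hR], fun i j hi hj => ?_⟩
    rw [len1] at hi hj
    rcases lt_trichotomy i l1.length with hi'|hi'|hi' <;>
      rcases lt_trichotomy j l1.length with hj'|hj'|hj'
    · rw [eL1 i hi', eL1 j hj', eR1 i hi', eR1 j hj']
      exact hp i j (by simp only [List.length_append]; omega) (by simp only [List.length_append]; omega)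
    · subst hj'
      rw [eL1 i hi', eR1 i hi', eLv, eRw]
      exact (hpt i (by omega)).1
    · rw [eL1 i hi', eL2 j hj', eR1 i hi', eR2 j hj']
      exact hp i (j-1) (by simp only [List.length_append]; omega) (by simp only [List.length_append]; omega)
    · subst hi'
      rw [eL1 j hj', eR1 j hj', eLv, eRw]
      exact (hpt j (by omega)).2
    · subst hi'; subst hj'
      rw [eLv, eRw]; simp
    · subst hi'
      rw [eL2 j hj', eR2 j hj', eLv, eRw]
      exact (hpt (j-1) (by omega)).2
    · rw [eL2 i hi', eL1 j hj', eR2 i hi', eR1 j hj']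
      exact hp (i-1) j (by simp only [List.length_append]; omega) (by simp only [List.length_append]; omega)
    · subst hj'
      rw [eL2 i hi', eR2 i hi', eLv, eRw]
      exact (hpt (i-1) (by omega)).1
    · rw [eL2 i hi', eL2 j hj', eR2 i hi', eR2 j hj']
      exact hp (i-1) (j-1) (by simp only [List.length_append]; omega) (by simp only [List.length_append]; omega)

/-! ### Sublist order utilities -/

lemma pair_ne {L : List ℕ} (hnd : L.Nodup) {u v : ℕ} (h : [u, v] <+ L) : u ≠ v := by
  have := h.nodup hnd
  simp at this
  exact this

lemma order_asymm {L : List ℕ} (hnd : L.Nodup) {u v : ℕ}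
    (h1 : [u, v] <+ L) (h2 : [v, u] <+ L) : False := by
  have hne : u ≠ v := pair_ne hnd h1
  induction L with
  | nil => simp at h1
  | cons x T ih =>
    rw [List.nodup_cons] at hnd
    rcases (List.sublist_cons_iff).mp h1 with h1'|⟨r1, hr1, hr1'⟩
    · rcases (List.sublist_cons_iff).mp h2 with h2'|⟨r2, hr2, hr2'⟩
      · exact ih hnd.2 h1' h2'
      · -- v = x, but v ∈ T from h1'
        have hv : v ∈ T := by
          have := h1'.subset; simp at this; tauto
        rw [List.cons_eq_cons] at hr2
        exact hnd.1 (hr2.1 ▸ hv)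
    · -- u = x
      rw [List.cons_eq_cons] at hr1
      obtain ⟨rfl, rfl⟩ := hr1
      rcases (List.sublist_cons_iff).mp h2 with h2'|⟨r2, hr2, hr2'⟩
      · have hu : u ∈ T := by
          have := h2'.subset; simp at this; tauto
        exact hnd.1 hu
      · rw [List.cons_eq_cons] at hr2
        exact hne (hr2.1.symm)

lemma order_total {L : List ℕ} (hnd : L.Nodup) {u v : ℕ}
    (hu : u ∈ L) (hv : v ∈ L) (hne : u ≠ v) : [u, v] <+ L ∨ [v, u] <+ L := by
  induction L with
  | nil => simp at hu
  | cons x T ih =>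
    rw [List.nodup_cons] at hnd
    rcases List.mem_cons.mp hu with rfl|hu'
    · left
      exact List.cons_sublist_cons.mpr (List.singleton_sublist.mpr
        (List.mem_cons.mp hv |>.resolve_left (fun h => hne h.symm)))
    · rcases List.mem_cons.mp hv with rfl|hv'
      · right
        exact List.cons_sublist_cons.mpr (List.singleton_sublist.mpr hu')
      · rcases ih hnd.2 hu' hv' with h|h
        · exact Or.inl (h.cons x)
        · exact Or.inr (h.cons x)

lemma order_split {A B : List ℕ} (hnd : (A ++ B).Nodup) {u v : ℕ}
    (h : [u, v] <+ A ++ B) (hv : v ∈ A) (hu : u ∈ B) : False := by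
  induction A with
  | nil => simp at hv
  | cons x A ih =>
    rw [List.cons_append, List.nodup_cons] at hnd
    rcases (List.sublist_cons_iff).mp h with h'|⟨r, hr, hr'⟩
    · rcases List.mem_cons.mp hv with rfl|hv'
      · have : v ∈ A ++ B := h'.subset (by simp)
        exact hnd.1 this
      · exact ih hnd.2 h' hv'
    · rw [List.cons_eq_cons] at hr
      obtain ⟨rfl, _⟩ := hr
      exact hnd.1 (List.mem_append.mpr (Or.inr hu))

lemma drop_left_gen {A B l : List ℕ} (h : l <+ A ++ B) (hl : ∀ e ∈ l, e ∉ A) : l <+ B := by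
  induction A with
  | nil => simpa using h
  | cons x A ih =>
    rcases (List.sublist_cons_iff).mp h with h'|⟨r, hr, hr'⟩
    · exact ih h' (fun e he => fun hc => hl e he (by simp [hc]))
    · exfalso
      exact hl x (by rw [hr]; simp) (by simp)

lemma cons_before {L : List ℕ} (hnd : L.Nodup) {a h : ℕ} {t : List ℕ}
    (ht : (h :: t) <+ L) (hah : [a, h] <+ L) : (a :: h :: t) <+ L := by
  induction L with
  | nil => simp at ht
  | cons x T ih =>
    rw [List.nodup_cons] at hnd
    have hne : a ≠ h := pair_ne (by rw [List.nodup_cons]; exact hnd) hah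
    by_cases hax : a = x
    · subst hax
      -- need h :: t <+ T
      rcases (List.sublist_cons_iff).mp ht with ht'|⟨r, hr, hr'⟩
      · exact List.cons_sublist_cons.mpr ht'
      · rw [List.cons_eq_cons] at hr
        exact absurd hr.1.symm hne
    · -- a ≠ x: everything in T
      have hah' : [a, h] <+ T := by
        rcases (List.sublist_cons_iff).mp hah with h'|⟨r, hr, _⟩
        · exact h'
        · rw [List.cons_eq_cons] at hr; exact absurd hr.1 hax
      have ht' : (h :: t) <+ T := by
        rcases (List.sublist_cons_iff).mp ht with h'|⟨r, hr, hr'⟩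
        · exact h'
        · rw [List.cons_eq_cons] at hr
          obtain ⟨rfl, rfl⟩ := hr
          exfalso
          exact hnd.1 (hah'.subset (by simp))
      exact (ih hnd.2 ht' hah').cons x

/-- build a sublist from a chain of pairwise order facts -/
lemma chain_sublist {L : List ℕ} (hnd : L.Nodup) :
    ∀ w : List ℕ, (∀ x ∈ w, x ∈ L) → w.Chain' (fun a b => [a, b] <+ L) → w <+ L := by
  intro w
  induction w with
  | nil => simp
  | cons a t ih =>
    intro hmem hch
    cases t with
    | nil => exact List.singleton_sublist.mpr (hmem a (by simp))
    | cons h t' =>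
      simp only [List.Chain', List.isChain_cons_cons] at hch
      exact cons_before hnd (ih (fun x hx => hmem x (by simp [hx])) hch.2) hch.1

lemma occ_chain {M : List ℕ} {Q : ℕ → ℕ → Prop} :
    ∀ (w : List ℕ) (b : ℕ), (b :: w) <+ M →
      (∀ x y, x ∈ w → y ∈ w → [b, x, y] <+ M → Q x y) → w.Chain' Q := by
  intro w
  induction w with
  | nil => intro _ _ _; exact List.isChain_nil
  | cons x t ih =>
    intro b hsub hQ
    cases t with
    | nil => exact List.isChain_singleton x
    | cons y t' =>
      simp only [List.Chain', List.isChain_cons_cons]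
      constructor
      · refine hQ x y (by simp) (by simp) ?_
        have : [b, x, y] <+ b :: x :: y :: t' := by
          apply List.cons_sublist_cons.mpr
          apply List.cons_sublist_cons.mpr
          exact List.singleton_sublist.mpr (by simp)
        exact this.trans hsub
      · refine ih b ?_ ?_
        · have : (b :: y :: t') <+ (b :: x :: y :: t') := by
            apply List.cons_sublist_cons.mpr
            exact List.sublist_cons_self x (y :: t')
          exact this.trans hsub
        · intro a c ha hc hs
          exact hQ a c (List.mem_cons_of_mem x ha) (List.mem_cons_of_mem x hc) hs

/-- pairs inside a range occur in increasing order -/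
lemma range_pair {t k u v : ℕ} (hu : u ∈ List.range' t k) (hv : v ∈ List.range' t k)
    (huv : u < v) : [u, v] <+ List.range' t k := by
  rw [List.mem_range'_1] at hu hv
  have hsplit : List.range' t (u + 1 - t) ++ List.range' (u + 1) (t + k - (u + 1)) =
      List.range' t k := by
    have := List.range'_append (s := t) (m := u + 1 - t) (n := t + k - (u + 1)) (step := 1)
    rw [show t + 1 * (u + 1 - t) = u + 1 by omega] at this
    rw [show (u + 1 - t) + (t + k - (u + 1)) = k by omega] at this
    simpa using this
  rw [← hsplit]
  have h1 : [u] <+ List.range' t (u + 1 - t) := by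
    rw [List.singleton_sublist, List.mem_range'_1]
    omega
  have h2 : [v] <+ List.range' (u + 1) (t + k - (u + 1)) := by
    rw [List.singleton_sublist, List.mem_range'_1]
    omega
  exact List.Sublist.append h1 h2

lemma sorted_pair_lt {t k u v : ℕ} (h : [u, v] <+ List.range' t k) : u < v := by
  have := List.Pairwise.sublist h (List.pairwise_lt_range' (s := t) (n := k))
  simp at this
  exact this

/-! ### psbAux equations -/

lemma psbAux_nil (s : List ℕ) : psbAux [] s = s := by cases s <;> rfl

lemma psbAux_cons_nil (x : ℕ) (xs : List ℕ) : psbAux (x :: xs) [] = psbAux xs [x] := rfl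

lemma psbAux_push {x t : ℕ} (xs s : List ℕ) (h : x + 1 = t) :
    psbAux (x :: xs) (t :: s) = psbAux xs (x :: t :: s) := by
  simp [psbAux, h]

lemma psbAux_bypass {x t : ℕ} (xs s : List ℕ) (h : x + 1 < t) :
    psbAux (x :: xs) (t :: s) = x :: psbAux xs (t :: s) := by
  rw [psbAux, if_neg (by omega), if_pos h]

lemma psbAux_flush {x t : ℕ} (xs s : List ℕ) (h : t ≤ x) :
    psbAux (x :: xs) (t :: s) = (t :: s) ++ psbAux xs [x] := by
  rw [psbAux, if_neg (by omega), if_neg (by omega)]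

lemma psbAux_perm : ∀ (q s : List ℕ), (psbAux q s).Perm (q ++ s) := by
  intro q
  induction q with
  | nil => intro s; rw [psbAux_nil]; simp
  | cons x xs ih =>
    intro s
    cases s with
    | nil =>
      rw [psbAux_cons_nil]
      refine (ih [x]).trans ?_
      simpa using (List.perm_append_singleton x xs).trans (by simp)
    | cons t s' =>
      rcases Nat.lt_trichotomy (x + 1) t with h|h|h
      · rw [psbAux_bypass xs s' h]
        exact ((ih (t :: s')).cons x)
      · rw [psbAux_push xs s' h]
        refine (ih (x :: t :: s')).trans ?_
        exact List.perm_middle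
      · rw [psbAux_flush xs s' (by omega)]
        calc (t :: s') ++ psbAux xs [x]
            ~ (t :: s') ++ (xs ++ [x]) := List.Perm.append_left _ (ih [x])
          _ ~ (t :: s') ++ (x :: xs) := List.Perm.append_left _ (List.perm_append_singleton x xs)
          _ ~ (x :: xs) ++ (t :: s') := List.perm_append_comm

lemma psb_perm (π : List ℕ) : (psb π).Perm π := by
  have := psbAux_perm π []
  simpa [psb] using this

/-- range' t k = t :: range' (t+1) k' when k = k'+1 -/
lemma range'_cons (t k' : ℕ) : List.range' t (k' + 1) = t :: List.range' (t + 1) k' :=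
  List.range'_succ (s := t) (n := k') (step := 1)

lemma range'_cons_down {z t k : ℕ} (h : z + 1 = t) :
    z :: List.range' t k = List.range' z (k + 1) := by
  rw [range'_cons, h]

/-- flush condition: the incoming element exceeds the whole stack -/
lemma flush_big {z t k : ℕ} {q : List ℕ} (hnd : ((z :: q) ++ List.range' t k).Nodup)
    (h : t ≤ z) : t + k ≤ z := by
  by_contra hc
  have hz : z ∈ List.range' t k := by rw [List.mem_range'_1]; omega
  rw [List.cons_append, List.nodup_cons] at hnd
  exact hnd.1 (List.mem_append.mpr (Or.inr hz))

lemma nodup_shift {z t k : ℕ} {q : List ℕ} (hnd : ((z :: q) ++ List.range' t k).Nodup)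
    (h : z + 1 = t) : (q ++ List.range' z (k + 1)).Nodup := by
  rw [← range'_cons_down h]
  have : ((z :: q) ++ List.range' t k).Perm (q ++ z :: List.range' t k) := by
    simpa using List.perm_middle.symm
  exact this.nodup hnd

lemma nodup_flushed {z t k : ℕ} {q : List ℕ} (hnd : ((z :: q) ++ List.range' t k).Nodup) :
    (q ++ List.range' z 1).Nodup := by
  have h1 : ((z :: q) ++ List.range' t k).Perm (List.range' t k ++ (z :: q)) :=
    List.perm_append_comm
  have h2 := (h1.nodup hnd)
  rw [List.nodup_append] at h2
  have : (q ++ [z]).Nodup := by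
    have := h2.2.1
    have hperm : (z :: q).Perm (q ++ [z]) := (List.perm_append_singleton z q).symm
    exact hperm.nodup this
  simpa using this

/-! ### Stack order lemmas -/

lemma stack_pair : ∀ (q : List ℕ) (t k : ℕ), ((q ++ List.range' t k)).Nodup →
    ∀ u v, u ∈ List.range' t k → v ∈ List.range' t k → u < v →
    [u, v] <+ psbAux q (List.range' t k) := by
  intro q
  induction q with
  | nil =>
    intro t k hnd u v hu hv huv
    rw [psbAux_nil]
    exact range_pair hu hv huv
  | cons z q ih =>
    intro t k hnd u v hu hv huv
    have hk : 0 < k := by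
      rcases List.mem_range'_1.mp hu with ⟨h1, h2⟩; omega
    obtain ⟨k', rfl⟩ : ∃ k', k = k' + 1 := ⟨k - 1, by omega⟩
    have htu := List.mem_range'_1.mp hu
    have htv := List.mem_range'_1.mp hv
    rcases Nat.lt_trichotomy (z + 1) t with h|h|h
    · rw [range'_cons, psbAux_bypass q _ h, ← range'_cons]
      exact (ih t (k' + 1) (by
        rw [List.cons_append, List.nodup_cons] at hnd; exact hnd.2) u v hu hv huv).cons z
    · rw [range'_cons, psbAux_push q _ h, ← range'_cons, range'_cons_down h]
      refine ih z (k' + 2) (nodup_shift hnd h) u v ?_ ?_ huv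
      · rw [List.mem_range'_1]; omega
      · rw [List.mem_range'_1]; omega
    · have hbig := flush_big hnd (by omega)
      rw [range'_cons, psbAux_flush q _ (by omega), ← range'_cons]
      exact (range_pair hu hv huv).trans (List.sublist_append_left _ _)

lemma stack_order : ∀ (q : List ℕ) (t k : ℕ), ((q ++ List.range' t k)).Nodup →
    ∀ u v, u ∈ List.range' t k → v ∈ q → u < v →
    [u, v] <+ psbAux q (List.range' t k) := by
  intro q
  induction q with
  | nil => intro t k hnd u v hu hv huv; simp at hv
  | cons z q ih =>
    intro t k hnd u v hu hv huv
    have hk : 0 < k := by rcases List.mem_range'_1.mp hu with ⟨h1, h2⟩; omega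
    obtain ⟨k', rfl⟩ : ∃ k', k = k' + 1 := ⟨k - 1, by omega⟩
    have htu := List.mem_range'_1.mp hu
    have hndq : (q ++ List.range' t (k' + 1)).Nodup := by
      rw [List.cons_append, List.nodup_cons] at hnd; exact hnd.2
    rcases Nat.lt_trichotomy (z + 1) t with h|h|h
    · rw [range'_cons, psbAux_bypass q _ h, ← range'_cons]
      rcases List.mem_cons.mp hv with rfl|hv'
      · omega
      · exact (ih t (k' + 1) hndq u v hu hv' huv).cons z
    · rw [range'_cons, psbAux_push q _ h, ← range'_cons, range'_cons_down h]
      rcases List.mem_cons.mp hv with rfl|hv'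
      · omega
      · refine ih z (k' + 2) (nodup_shift hnd h) u v ?_ hv' huv
        rw [List.mem_range'_1]; omega
    · have hbig := flush_big hnd (by omega)
      rw [range'_cons, psbAux_flush q _ (by omega), ← range'_cons]
      have hvX : v ∈ psbAux q (List.range' z 1) := by
        rw [(psbAux_perm q (List.range' z 1)).mem_iff]
        rcases List.mem_cons.mp hv with rfl|hv'
        · simp
        · exact List.mem_append.mpr (Or.inl hv')
      have h1 : [u] <+ List.range' t (k' + 1) := List.singleton_sublist.mpr hu
      have h2 : [v] <+ psbAux q (List.range' z 1) := List.singleton_sublist.mpr hvX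
      exact List.Sublist.append h1 h2

lemma f2core2 : ∀ (q : List ℕ) (t k : ℕ), ((q ++ List.range' t k)).Nodup →
    ∀ b v, v ∈ List.range' t k → b ∈ q → v < b →
    ¬ ([b, v] <+ psbAux q (List.range' t k)) := by
  intro q
  induction q with
  | nil => intro t k hnd b v hv hb hvb; simp at hb
  | cons z q ih =>
    intro t k hnd b v hv hb hvb hsub
    have hk : 0 < k := by rcases List.mem_range'_1.mp hv with ⟨h1, h2⟩; omega
    obtain ⟨k', rfl⟩ : ∃ k', k = k' + 1 := ⟨k - 1, by omega⟩
    have htv := List.mem_range'_1.mp hv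
    have hndq : (q ++ List.range' t (k' + 1)).Nodup := by
      rw [List.cons_append, List.nodup_cons] at hnd; exact hnd.2
    rcases Nat.lt_trichotomy (z + 1) t with h|h|h
    · rw [range'_cons, psbAux_bypass q _ h, ← range'_cons] at hsub
      rcases List.mem_cons.mp hb with rfl|hb'
      · omega
      · rcases List.sublist_cons_iff.mp hsub with h'|⟨r, hr, hr'⟩
        · exact ih t (k' + 1) hndq b v hv hb' hvb h'
        · rw [List.cons_eq_cons] at hr
          omega
    · rw [range'_cons, psbAux_push q _ h, ← range'_cons, range'_cons_down h] at hsub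
      rcases List.mem_cons.mp hb with rfl|hb'
      · omega
      · refine ih z (k' + 2) (nodup_shift hnd h) b v ?_ hb' hvb hsub
        rw [List.mem_range'_1]; omega
    · have hbig := flush_big hnd (by omega)
      rw [range'_cons, psbAux_flush q _ (by omega), ← range'_cons] at hsub
      -- v is in the flushed part, b only occurs in the tail part
      have hndX : (List.range' t (k' + 1) ++ psbAux q (List.range' z 1)).Nodup := by
        have h1 : ((z :: q) ++ List.range' t (k' + 1)).Perm
            (List.range' t (k' + 1) ++ (z :: q)) := List.perm_append_comm
        have h2 := h1.nodup hnd
        have h3 : (z :: q).Perm (psbAux q (List.range' z 1)) := by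
          refine List.Perm.symm ((psbAux_perm q _).trans ?_)
          simpa using (List.perm_append_singleton z q).symm
        exact (List.Perm.append_left _ h3).nodup h2
      have hbX : b ∈ psbAux q (List.range' z 1) := by
        rw [(psbAux_perm q (List.range' z 1)).mem_iff]
        rcases List.mem_cons.mp hb with rfl|hb'
        · simp
        · exact List.mem_append.mpr (Or.inl hb')
      exact order_split hndX hsub hv hbX

lemma bypass_run : ∀ (q : List ℕ) (t k : ℕ) (w : List ℕ) (b : ℕ), 0 < k →
    ((q ++ List.range' t k)).Nodup → b < t → b ∉ q → w <+ q → (∀ x ∈ w, x < b) →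
    w <+ psbAux q (List.range' t k) := by
  intro q
  induction q with
  | nil =>
    intro t k w b hk hnd hb hbq hw hwb
    rw [psbAux_nil]
    have : w = [] := List.eq_nil_of_sublist_nil hw
    simp [this]
  | cons z q ih =>
    intro t k w b hk hnd hb hbq hw hwb
    obtain ⟨k', rfl⟩ : ∃ k', k = k' + 1 := ⟨k - 1, by omega⟩
    have hndq : (q ++ List.range' t (k' + 1)).Nodup := by
      rw [List.cons_append, List.nodup_cons] at hnd; exact hnd.2
    have hbq' : b ∉ q := fun h => hbq (by simp [h])
    have hbz : b ≠ z := fun h => hbq (by simp [h])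
    rcases Nat.lt_trichotomy (z + 1) t with h|h|h
    · rw [range'_cons, psbAux_bypass q _ h, ← range'_cons]
      rcases List.sublist_cons_iff.mp hw with h'|⟨r, hr, hr'⟩
      · exact (ih t (k' + 1) w b hk hndq hb hbq' h' hwb).cons z
      · subst hr
        refine List.cons_sublist_cons.mpr ?_
        exact ih t (k' + 1) r b hk hndq hb hbq' hr' (fun x hx => hwb x (by simp [hx]))
    · rw [range'_cons, psbAux_push q _ h, ← range'_cons, range'_cons_down h]
      rcases List.sublist_cons_iff.mp hw with h'|⟨r, hr, hr'⟩
      · refine ih z (k' + 2) w b (by omega) (nodup_shift hnd h) ?_ hbq' h' hwb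
        omega
      · exfalso
        have : z ∈ w := by rw [hr]; simp
        have := hwb z this
        omega
    · have hbig := flush_big hnd (by omega)
      rw [range'_cons, psbAux_flush q _ (by omega), ← range'_cons]
      rcases List.sublist_cons_iff.mp hw with h'|⟨r, hr, hr'⟩
      · have := ih z 1 w b (by omega) (nodup_flushed hnd) (by omega) hbq' h' hwb
        exact this.trans (List.sublist_append_right _ _)
      · exfalso
        have : z ∈ w := by rw [hr]; simp
        have := hwb z this
        omega

lemma trigger : ∀ (q : List ℕ) (t k : ℕ) (b : ℕ) (w : List ℕ),
    ((q ++ List.range' t k)).Nodup → b ∈ List.range' t k → w ≠ [] →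
    (∀ x ∈ w, x < b) → (b :: w) <+ psbAux q (List.range' t k) →
    ∃ y q1 q2, q = q1 ++ y :: q2 ∧ t + k ≤ y ∧ ∀ x ∈ w, x ∈ q2 := by
  intro q
  induction q with
  | nil =>
    intro t k b w hnd hb hw hwb hsub
    exfalso
    rw [psbAux_nil] at hsub
    obtain ⟨w0, w', rfl⟩ : ∃ w0 w', w = w0 :: w' := by
      cases w with
      | nil => exact absurd rfl hw
      | cons a l => exact ⟨a, l, rfl⟩
    have : [b, w0] <+ List.range' t k := by
      refine List.Sublist.trans ?_ hsub
      exact List.cons_sublist_cons.mpr (List.cons_sublist_cons.mpr (List.nil_sublist _))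
    have := sorted_pair_lt this
    have := hwb w0 (by simp)
    omega
  | cons z q ih =>
    intro t k b w hnd hb hw hwb hsub
    have hk : 0 < k := by rcases List.mem_range'_1.mp hb with ⟨h1, h2⟩; omega
    obtain ⟨k', rfl⟩ : ∃ k', k = k' + 1 := ⟨k - 1, by omega⟩
    have htb := List.mem_range'_1.mp hb
    have hndq : (q ++ List.range' t (k' + 1)).Nodup := by
      rw [List.cons_append, List.nodup_cons] at hnd; exact hnd.2
    have hbz : b ≠ z := by
      rw [List.cons_append, List.nodup_cons] at hnd
      intro hc
      exact hnd.1 (List.mem_append.mpr (Or.inr (hc ▸ hb)))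
    rcases Nat.lt_trichotomy (z + 1) t with h|h|h
    · rw [range'_cons, psbAux_bypass q _ h, ← range'_cons] at hsub
      have hsub' : (b :: w) <+ psbAux q (List.range' t (k' + 1)) := by
        rcases List.sublist_cons_iff.mp hsub with h'|⟨r, hr, hr'⟩
        · exact h'
        · rw [List.cons_eq_cons] at hr
          exact absurd hr.1 hbz
      obtain ⟨y, q1, q2, rfl, hy, hq2⟩ := ih t (k' + 1) b w hndq hb hw hwb hsub'
      exact ⟨y, z :: q1, q2, by simp, hy, hq2⟩
    · rw [range'_cons, psbAux_push q _ h, ← range'_cons, range'_cons_down h] at hsub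
      obtain ⟨y, q1, q2, rfl, hy, hq2⟩ :=
        ih z (k' + 2) b w (nodup_shift hnd h) (by rw [List.mem_range'_1]; omega) hw hwb hsub
      exact ⟨y, z :: q1, q2, by simp, by omega, hq2⟩
    · have hbig := flush_big hnd (by omega)
      refine ⟨z, [], q, by simp, by omega, ?_⟩
      rw [range'_cons, psbAux_flush q _ (by omega), ← range'_cons] at hsub
      intro x hx
      -- x must be in the recursive part
      have hndX : (List.range' t (k' + 1) ++ psbAux q (List.range' z 1)).Nodup := by
        have h1 : ((z :: q) ++ List.range' t (k' + 1)).Perm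
            (List.range' t (k' + 1) ++ (z :: q)) := List.perm_append_comm
        have h2 := h1.nodup hnd
        have h3 : (z :: q).Perm (psbAux q (List.range' z 1)) := by
          refine List.Perm.symm ((psbAux_perm q _).trans ?_)
          simpa using (List.perm_append_singleton z q).symm
        exact (List.Perm.append_left _ h3).nodup h2
      have hxmem : x ∈ List.range' t (k' + 1) ++ psbAux q (List.range' z 1) := by
        have : x ∈ b :: w := by simp [hx]
        exact hsub.subset this
      rcases List.mem_append.mp hxmem with hxr|hxX
      · -- x in the flushed stack: contradiction with order
        exfalso
        have hxb : x < b := hwb x hx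
        have h1 : [x, b] <+ List.range' t (k' + 1) ++ psbAux q (List.range' z 1) :=
          (range_pair hxr hb hxb).trans (List.sublist_append_left _ _)
        have h2 : [b, x] <+ List.range' t (k' + 1) ++ psbAux q (List.range' z 1) := by
          refine List.Sublist.trans ?_ hsub
          exact List.cons_sublist_cons.mpr (List.singleton_sublist.mpr hx)
        exact order_asymm hndX h2 h1
      · -- x is in the rest: show x ∈ q
        have := (psbAux_perm q (List.range' z 1)).mem_iff.mp hxX
        rcases List.mem_append.mp this with h'|h'
        · exact h'
        · exfalso
          have : x = z := by simpa using h'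
          have := hwb x hx
          omega

/-! ### Prefix decomposition -/

lemma split_aux : ∀ (p : List ℕ) (t k : ℕ), 0 < k → ((p ++ List.range' t k)).Nodup →
    ∃ o t' k', 0 < k' ∧ (o ++ List.range' t' k').Perm (List.range' t k ++ p) ∧
      (∀ z ∈ List.range' t k ++ p, z < t' + k') ∧
      (List.range' t' k').reverse <+ ((List.range' t k).reverse ++ p) ∧
      ∀ q : List ℕ, psbAux (p ++ q) (List.range' t k) = o ++ psbAux q (List.range' t' k') := by
  intro p
  induction p with
  | nil =>
    intro t k hk hnd
    refine ⟨[], t, k, hk, by simp, ?_, by simp, fun q => by simp⟩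
    intro z hz
    simp only [List.append_nil] at hz
    rcases List.mem_range'_1.mp hz with ⟨h1, h2⟩
    omega
  | cons z p ih =>
    intro t k hk hnd
    obtain ⟨k'', rfl⟩ : ∃ k'', k = k'' + 1 := ⟨k - 1, by omega⟩
    have hndq : (p ++ List.range' t (k'' + 1)).Nodup := by
      rw [List.cons_append, List.nodup_cons] at hnd; exact hnd.2
    rcases Nat.lt_trichotomy (z + 1) t with h|h|h
    · -- bypass
      obtain ⟨o, t', k', hk', hperm, hmax, hord, heq⟩ := ih t (k'' + 1) hk hndq
      refine ⟨z :: o, t', k', hk', ?_, ?_, ?_, ?_⟩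
      · calc (z :: o) ++ List.range' t' k' = z :: (o ++ List.range' t' k') := by simp
          _ ~ z :: (List.range' t (k'' + 1) ++ p) := hperm.cons z
          _ ~ List.range' t (k'' + 1) ++ (z :: p) := List.perm_middle.symm
      · intro e he
        rcases List.mem_append.mp he with he'|he'
        · exact hmax e (List.mem_append.mpr (Or.inl he'))
        · rcases List.mem_cons.mp he' with rfl|he''
          · have : t + (k'' + 1) - 1 ∈ List.range' t (k'' + 1) := by
              rw [List.mem_range'_1]; omega
            have := hmax _ (List.mem_append.mpr (Or.inl this))
            omega
          · exact hmax e (List.mem_append.mpr (Or.inr he''))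
      · refine hord.trans ?_
        refine List.Sublist.append_left ?_ _
        exact List.sublist_cons_self z p
      · intro q
        rw [List.cons_append, range'_cons, psbAux_bypass _ _ h, ← range'_cons, heq q]
        simp
    · -- push
      obtain ⟨o, t', k', hk', hperm, hmax, hord, heq⟩ := ih z (k'' + 2) (by omega)
        (by rw [← range'_cons_down h]
            have : ((z :: p) ++ List.range' t (k'' + 1)).Perm (p ++ z :: List.range' t (k'' + 1)) := by
              simpa using List.perm_middle.symm
            exact this.nodup hnd)
      refine ⟨o, t', k', hk', ?_, ?_, ?_, ?_⟩
      · refine hperm.trans ?_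
        rw [← range'_cons_down h]
        calc (z :: List.range' t (k'' + 1)) ++ p ~ z :: (List.range' t (k'' + 1) ++ p) := by simp
          _ ~ List.range' t (k'' + 1) ++ (z :: p) := List.perm_middle.symm
      · intro e he
        refine hmax e ?_
        rw [← range'_cons_down h]
        rcases List.mem_append.mp he with he'|he'
        · exact List.mem_append.mpr (Or.inl (by simp [he']))
        · rcases List.mem_cons.mp he' with rfl|he''
          · exact List.mem_append.mpr (Or.inl (by simp))
          · exact List.mem_append.mpr (Or.inr he'')
      · refine hord.trans ?_
        rw [← range'_cons_down h]
        have : (z :: List.range' t (k'' + 1)).reverse = (List.range' t (k'' + 1)).reverse ++ [z] := by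
          simp
        rw [this, List.append_assoc]
        simp
      · intro q
        rw [List.cons_append, range'_cons, psbAux_push _ _ h, ← range'_cons,
          range'_cons_down h, heq q]
    · -- flush
      have hbig := flush_big hnd (by omega)
      obtain ⟨o, t', k', hk', hperm, hmax, hord, heq⟩ := ih z 1 (by omega) (nodup_flushed hnd)
      refine ⟨List.range' t (k'' + 1) ++ o, t', k', hk', ?_, ?_, ?_, ?_⟩
      · calc (List.range' t (k'' + 1) ++ o) ++ List.range' t' k'
            = List.range' t (k'' + 1) ++ (o ++ List.range' t' k') := by simp
          _ ~ List.range' t (k'' + 1) ++ (List.range' z 1 ++ p) := List.Perm.append_left _ hperm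
          _ ~ List.range' t (k'' + 1) ++ (z :: p) := by simp
      · intro e he
        rcases List.mem_append.mp he with he'|he'
        · have hz : z < t' + k' := hmax z (List.mem_append.mpr (Or.inl (by simp)))
          rcases List.mem_range'_1.mp he' with ⟨h1, h2⟩
          omega
        · rcases List.mem_cons.mp he' with rfl|he''
          · exact hmax e (List.mem_append.mpr (Or.inl (by simp)))
          · exact hmax e (List.mem_append.mpr (Or.inr he''))
      · refine hord.trans ?_
        have : (List.range' z 1).reverse ++ p = z :: p := by simp
        rw [this]
        exact List.sublist_append_right _ _
      · intro q
        rw [List.cons_append, range'_cons, psbAux_flush _ _ (by omega), ← range'_cons]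
        have : [z] = List.range' z 1 := by simp
        rw [this, heq q]
        simp

lemma split (π p q : List ℕ) (hπ : π = p ++ q) (hnd : π.Nodup) (hp : p ≠ []) :
    ∃ o t k, 0 < k ∧ (o ++ List.range' t k).Perm p ∧ (∀ z ∈ p, z < t + k) ∧
      (List.range' t k).reverse <+ p ∧ psb π = o ++ psbAux q (List.range' t k) := by
  obtain ⟨x, p', rfl⟩ : ∃ x p', p = x :: p' := by
    cases p with
    | nil => exact absurd rfl hp
    | cons a l => exact ⟨a, l, rfl⟩
  have hnd' : (p' ++ List.range' x 1).Nodup := by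
    have h1 : (x :: (p' ++ q)).Nodup := by rw [hπ] at hnd; simpa using hnd
    rw [List.nodup_cons] at h1
    have h2 : (p' ++ q).Nodup := h1.2
    rw [List.nodup_append] at h2
    rw [List.nodup_append]
    refine ⟨h2.1, by simp, ?_⟩
    intro a ha b hb hc
    simp only [List.mem_range'_1] at hb
    have : a = x := by omega
    exact h1.1 (by rw [← this]; exact List.mem_append.mpr (Or.inl ha))
  obtain ⟨o, t, k, hk, hperm, hmax, hord, heq⟩ := split_aux p' x 1 (by omega) hnd'
  refine ⟨o, t, k, hk, ?_, ?_, ?_, ?_⟩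
  · refine hperm.trans ?_
    simp
  · intro z hz
    refine hmax z ?_
    rcases List.mem_cons.mp hz with rfl|hz'
    · exact List.mem_append.mpr (Or.inl (by simp))
    · exact List.mem_append.mpr (Or.inr hz')
  · refine hord.trans ?_
    simp
  · rw [hπ, psb, List.cons_append, psbAux_cons_nil]
    have : [x] = List.range' x 1 := by simp
    rw [this, heq q]

/-! ### Order transfer lemmas -/

lemma sub_split {x : ℕ} {l L : List ℕ} (h : (x :: l) <+ L) :
    ∃ p q, L = p ++ x :: q ∧ l <+ q := by
  rcases List.cons_sublist_iff.mp h with ⟨r1, r2, rfl, hx, hl⟩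
  obtain ⟨p0, p1, rfl⟩ := List.append_of_mem hx
  exact ⟨p0, p1 ++ r2, by simp, hl.trans (List.sublist_append_right _ _)⟩

lemma nodup_big {π P q o : List ℕ} {t k : ℕ} (hnd : π.Nodup) (hπ : π = P ++ q)
    (hperm : (o ++ List.range' t k).Perm P) :
    (o ++ (List.range' t k ++ q)).Nodup := by
  have hp : π.Perm (o ++ (List.range' t k ++ q)) := by
    rw [hπ]
    calc P ++ q ~ (o ++ List.range' t k) ++ q := (hperm.symm).append_right q
      _ = o ++ (List.range' t k ++ q) := by simp
  exact hp.nodup hnd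

lemma nodup_big_parts {π P q o : List ℕ} {t k : ℕ} (hnd : π.Nodup) (hπ : π = P ++ q)
    (hperm : (o ++ List.range' t k).Perm P) :
    (q ++ List.range' t k).Nodup ∧ (∀ z ∈ o, z ∉ q) ∧ (∀ z ∈ o, z ∉ List.range' t k) := by
  have hbig := nodup_big hnd hπ hperm
  rw [List.nodup_append] at hbig
  obtain ⟨h1, h2, h3⟩ := hbig
  refine ⟨?_, ?_, ?_⟩
  · have : (List.range' t k ++ q).Perm (q ++ List.range' t k) := List.perm_append_comm
    exact this.nodup h2
  · intro z hz hc
    exact h3 z hz z (List.mem_append.mpr (Or.inr hc)) rfl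
  · intro z hz hc
    exact h3 z hz z (List.mem_append.mpr (Or.inl hc)) rfl

lemma f1 {π : List ℕ} (hnd : π.Nodup) {u v : ℕ} (huv : u < v) (h : [u, v] <+ π) :
    [u, v] <+ psb π := by
  obtain ⟨p0, q, hπ, hv⟩ := sub_split h
  rw [List.singleton_sublist] at hv
  have hπ' : π = (p0 ++ [u]) ++ q := by rw [hπ]; simp
  obtain ⟨o, t, k, hk, hperm, hmax, hord, heq⟩ := split π (p0 ++ [u]) q hπ' hnd (by simp)
  have hu : u ∈ p0 ++ [u] := by simp
  obtain ⟨hndq, hdisj1, hdisj2⟩ := nodup_big_parts hnd hπ' hperm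
  rcases (hperm.mem_iff.mpr hu : u ∈ o ++ List.range' t k) |> List.mem_append.mp with ho|hs
  · -- u already output
    rw [heq]
    have h1 : [u] <+ o := List.singleton_sublist.mpr ho
    have h2 : [v] <+ psbAux q (List.range' t k) := by
      rw [List.singleton_sublist, (psbAux_perm q _).mem_iff]
      exact List.mem_append.mpr (Or.inl hv)
    exact List.Sublist.append h1 h2
  · -- u in the stack
    rw [heq]
    have := stack_order q t k hndq u v hs hv huv
    exact this.trans (List.sublist_append_right _ _)

lemma f2 {π : List ℕ} (hnd : π.Nodup) {b u v : ℕ} (h : [b, u, v] <+ psb π)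
    (huv : u < v) (hvb : v < b) : [u, v] <+ π := by
  have hndpsb : (psb π).Nodup := (psb_perm π).symm.nodup hnd
  have hmem : ∀ x ∈ [b, u, v], x ∈ π := fun x hx => (psb_perm π).subset (h.subset hx)
  by_contra hc
  have hvu : [v, u] <+ π := by
    rcases order_total hnd (hmem u (by simp)) (hmem v (by simp)) (by omega) with h'|h'
    · exact absurd h' hc
    · exact h'
  obtain ⟨p0, q, hπ, hu⟩ := sub_split hvu
  rw [List.singleton_sublist] at hu
  have hπ' : π = (p0 ++ [v]) ++ q := by rw [hπ]; simp
  obtain ⟨o, t, k, hk, hperm, hmax, hord, heq⟩ := split π (p0 ++ [v]) q hπ' hnd (by simp)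
  obtain ⟨hndq, hdisj1, hdisj2⟩ := nodup_big_parts hnd hπ' hperm
  have hvP : v ∈ p0 ++ [v] := by simp
  have huv_psb : [u, v] <+ psb π := (List.sublist_cons_self b [u, v]).trans h
  rcases (hperm.mem_iff.mpr hvP : v ∈ o ++ List.range' t k) |> List.mem_append.mp with ho|hs
  · -- v already output before its own suffix: u comes later, contradiction
    have hX : u ∈ psbAux q (List.range' t k) := by
      rw [(psbAux_perm q _).mem_iff]; exact List.mem_append.mpr (Or.inl hu)
    have hndOX : (o ++ psbAux q (List.range' t k)).Nodup := by rw [← heq]; exact hndpsb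
    exact order_split hndOX (by rw [← heq]; exact huv_psb) ho hX
  · -- v is in the stack
    have hbπ : b ∈ π := hmem b (by simp)
    rw [hπ'] at hbπ
    rcases List.mem_append.mp hbπ with hbP|hbq
    · rcases (hperm.mem_iff.mpr hbP : b ∈ o ++ List.range' t k) |> List.mem_append.mp with hbo|hbs
      · -- b was output already: but its value lies in the stack interval
        have hvt := List.mem_range'_1.mp hs
        have hbr : b ∈ List.range' t k := by
          rw [List.mem_range'_1]
          have := hmax b hbP
          omega
        exact hdisj2 b hbo hbr
      · -- b in the stack together with v: order within flush is increasing
        have h1 : [v, b] <+ psbAux q (List.range' t k) := stack_pair q t k hndq v b hs hbs hvb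
        have h2 : [v, b] <+ psb π := by
          rw [heq]
          exact h1.trans (List.sublist_append_right _ _)
        have h3 : [b, v] <+ psb π := by
          refine List.Sublist.trans ?_ h
          exact List.cons_sublist_cons.mpr (List.sublist_cons_self u [v])
        exact order_asymm hndpsb h3 h2
    · -- b comes later in the input: f2core2
      have h3 : [b, v] <+ psb π := by
        refine List.Sublist.trans ?_ h
        exact List.cons_sublist_cons.mpr (List.sublist_cons_self u [v])
      rw [heq] at h3
      have h4 : [b, v] <+ psbAux q (List.range' t k) := by
        refine drop_left_gen h3 ?_
        intro e he
        rcases List.mem_cons.mp he with rfl|he'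
        · exact fun hc' => hdisj1 e hc' hbq
        · have : e = v := by simpa using he'
          subst this
          exact fun hc' => hdisj2 e hc' hs
      exact f2core2 q t k hndq b v hs hbq hvb h4

/-! ### Direction B -/

lemma sub_remove_mid {α A B : List ℕ} {x : ℕ} (h : α <+ A ++ x :: B) (hx : x ∉ α) :
    α <+ A ++ B := by
  induction A generalizing α with
  | nil =>
    simp only [List.nil_append] at *
    rcases List.sublist_cons_iff.mp h with h'|⟨r, rfl, hr⟩
    · exact h'
    · exact absurd (by simp : x ∈ x :: r) hx
  | cons z A ih =>
    rw [List.cons_append] at h ⊢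
    rcases List.sublist_cons_iff.mp h with h'|⟨r, rfl, hr⟩
    · exact (ih h' hx).cons z
    · refine List.cons_sublist_cons.mpr ?_
      exact ih hr (fun hc => hx (by simp [hc]))

lemma mem_notin_q {π P q : List ℕ} (hnd : π.Nodup) (hπ : π = P ++ q) {x : ℕ} (hx : x ∈ P) :
    x ∉ q := by
  rw [hπ, List.nodup_append] at hnd
  exact fun hq => hnd.2.2 x hx x hq rfl

lemma prefix_order {π P q : List ℕ} (hπ : π = P ++ q) {x y : ℕ} (h : [x, y] <+ P) :
    [x, y] <+ π := by
  rw [hπ]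
  exact h.trans (List.sublist_append_left _ _)

lemma rev_range_pair {t k u v : ℕ} (hu : u ∈ List.range' t k) (hv : v ∈ List.range' t k)
    (huv : v < u) : [u, v] <+ (List.range' t k).reverse := by
  have := (range_pair hv hu huv).reverse
  simpa using this

/-- If `x` lands in the stack right after being read along with a later bigger
element `a` that is also forced into the stack interval, we get an order
contradiction; this packages the common "x must have been output" argument. -/
lemma x_in_out {π P q o : List ℕ} {t k x : ℕ} (hnd : π.Nodup) (hπ : π = P ++ q)
    (hperm : (o ++ List.range' t k).Perm P) (hmax : ∀ z ∈ P, z < t + k)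
    (hxP : x ∈ P) (hxnr : x ∉ List.range' t k) : x ∈ o ∧ x < t := by
  have hx' : x ∈ o ++ List.range' t k := hperm.mem_iff.mpr hxP
  rcases List.mem_append.mp hx' with ho|hs
  · refine ⟨ho, ?_⟩
    have h1 := hmax x hxP
    rw [List.mem_range'_1] at hxnr
    omega
  · exact absurd hs hxnr

lemma dirB1 {π : List ℕ} (hnd : π.Nodup) {n : ℕ} {α : List ℕ}
    (hαm : ∀ y ∈ α, y < n) (h : Contains π (n :: (n + 1) :: α)) :
    Contains (psb π) (n :: α) := by
  rw [contains_iff] at h ⊢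
  obtain ⟨τ, hsub, hp⟩ := h
  obtain ⟨x, z, u, rfl⟩ : ∃ x z u, τ = x :: z :: u := by
    have := hp.1
    cases τ with
    | nil => simp at this
    | cons x τ' =>
      cases τ' with
      | nil => simp at this
      | cons z u => exact ⟨x, z, u, rfl⟩
  have hlen : u.length = α.length := by have := hp.1; simpa using this
  -- extract pattern facts
  have hp1 := (pat_cons_iff (by simp [hlen])).mp hp
  have hxz : x < z := by
    have := (hp1.2 0 (by simp)).2
    simpa using this
  have hp2 := pat_cons_max_elim hp1.1 (fun y hy => by have := hαm y hy; omega)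
  have hpu : Pat u α := hp2.1
  have hwx : ∀ e ∈ u, e < x := by
    intro e he
    obtain ⟨i, hi, rfl⟩ := List.mem_iff_getElem.mp he
    rw [← gx u i hi]
    have := (hp1.2 (i + 1) (by simpa using Nat.succ_lt_succ hi)).1
    rw [List.getElem!_cons_succ, List.getElem!_cons_succ] at this
    have hα := hαm (α[i]!) (gx_mem α i (by omega))
    omega
  -- positions
  obtain ⟨p1, r, rfl, hr⟩ := sub_split hsub
  obtain ⟨p2, q, rfl, hq⟩ := sub_split hr
  set π : List ℕ := p1 ++ x :: (p2 ++ z :: q) with hπdef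
  have hπ' : π = (p1 ++ x :: (p2 ++ [z])) ++ q := by simp [hπdef]
  obtain ⟨o, t, k, hk, hperm, hmax, hord, heq⟩ := split π _ q hπ' hnd (by simp)
  obtain ⟨hndq, hdisj1, hdisj2⟩ := nodup_big_parts hnd hπ' hperm
  have hxP : x ∈ p1 ++ x :: (p2 ++ [z]) := by simp
  have hzP : z ∈ p1 ++ x :: (p2 ++ [z]) := by simp
  have hxnr : x ∉ List.range' t k := by
    intro hxr
    -- then z is also in the stack interval, contradiction with read order
    have hzr : z ∈ List.range' t k := by
      rw [List.mem_range'_1]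
      have h1 := hmax z hzP
      have h2 := (List.mem_range'_1.mp hxr).1
      omega
    have h1 : [z, x] <+ π := prefix_order hπ' ((rev_range_pair hzr hxr hxz).trans hord)
    have h2 : [x, z] <+ π := by
      refine List.Sublist.trans ?_ hsub
      exact List.cons_sublist_cons.mpr (List.cons_sublist_cons.mpr (List.nil_sublist _))
    exact order_asymm hnd h2 h1 
  obtain ⟨hxo, hxt⟩ := x_in_out hnd hπ' hperm hmax hxP hxnr
  have hrun : u <+ psbAux q (List.range' t k) :=
    bypass_run q t k u x hk hndq hxt (mem_notin_q hnd hπ' hxP) hq hwx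
  refine ⟨x :: u, ?_, ?_⟩
  · rw [heq]
    exact List.Sublist.append (List.singleton_sublist.mpr hxo) hrun
  · exact pat_cons_max hlen hwx hαm hpu

lemma shuffle_decomp {n : ℕ} {α τ : List ℕ} (hαm : ∀ y ∈ α, y < n)
    (hsh : IsShuffle [n + 1] α τ) :
    ∃ α1 α2, τ = α1 ++ (n + 1) :: α2 ∧ α = α1 ++ α2 := by
  obtain ⟨h1, h2, h3⟩ := hsh
  have hmem : (n + 1) ∈ τ := (List.singleton_sublist.mp h1)
  obtain ⟨τ1, τ2, rfl⟩ := List.append_of_mem hmem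
  have hnα : (n + 1) ∉ α := fun hc => by have := hαm _ hc; omega
  have h4 : α <+ τ1 ++ τ2 := sub_remove_mid h2 hnα
  have h5 : α.length = (τ1 ++ τ2).length := by
    have := h3.length_eq
    simp at this ⊢
    omega
  exact ⟨τ1, τ2, rfl, h4.eq_of_length h5⟩

lemma dirB2 {π : List ℕ} (hnd : π.Nodup) {n : ℕ} {α τ : List ℕ}
    (hαm : ∀ y ∈ α, y < n) (hsh : IsShuffle [n + 1] α τ)
    (h : Contains π ((n + 2) :: n :: τ)) :
    Contains (psb π) (n :: α) := by
  obtain ⟨α1, α2, rfl, hα12⟩ := shuffle_decomp hαm hsh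
  rw [contains_iff] at h ⊢
  obtain ⟨τ', hsub, hp⟩ := h
  obtain ⟨c, x, u, rfl⟩ : ∃ c x u, τ' = c :: x :: u := by
    have := hp.1
    cases τ' with
    | nil => simp at this
    | cons c τ'' =>
      cases τ'' with
      | nil => simp at this
      | cons x u => exact ⟨c, x, u, rfl⟩
  have hlen : u.length = α1.length + α2.length + 1 := by
    have := hp.1; simp at this; omega
  -- split u at the position of the (n+1) entry
  set m := α1.length with hm
  have hmu : m < u.length := by omega
  set a := u[m] with ha
  have husplit : u = u.take m ++ a :: u.drop (m + 1) := by
    rw [ha, ← List.drop_eq_getElem_cons hmu, List.take_append_drop]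
  set u1 := u.take m with hu1
  set u2 := u.drop (m + 1) with hu2
  have hlen1 : u1.length = m := by rw [hu1]; simp; omega
  have hlen2 : u2.length = α2.length := by rw [hu2]; simp; omega
  -- regroup the pattern statement for pat_mid_iff
  have hp' : Pat ((c :: x :: u1) ++ a :: u2) (((n + 2) :: n :: α1) ++ (n + 1) :: α2) := by
    have h' := hp
    rw [husplit] at h'
    simpa using h'
  have hmid := (pat_mid_iff (by simp [hlen1, hm]) (by simp [hlen2])).mp hp'
  have hbase : Pat (c :: x :: (u1 ++ u2)) ((n + 2) :: n :: α) := by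
    have := hmid.1
    rw [hα12]
    simpa using this
  -- extract value facts about a
  have hxa : x < a := by
    have := (hmid.2 1 (by simp [hlen1]; omega)).1
    have e1 : ((c :: x :: u1) ++ u2)[1]! = x := by
      rw [gx_app, if_pos (by simp)]
      simp
    have e2 : (((n + 2) :: n :: α1) ++ α2)[1]! = n := by
      rw [gx_app, if_pos (by simp)]
      simp
    rw [e1, e2] at this
    omega
  have hac : a < c := by
    have := (hmid.2 0 (by simp)).2
    have e1 : ((c :: x :: u1) ++ u2)[0]! = c := by
      rw [gx_app, if_pos (by simp)]
      simp
    have e2 : (((n + 2) :: n :: α1) ++ α2)[0]! = n + 2 := by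
      rw [gx_app, if_pos (by simp)]
      simp
    rw [e1, e2] at this
    omega
  -- peel the two leading entries
  have hstep1 := pat_cons_max_elim hbase (by
    intro y hy
    rcases List.mem_cons.mp hy with rfl|hy'
    · omega
    · have := hαm y hy'; omega)
  have hstep2 := pat_cons_max_elim hstep1.1 (fun y hy => hαm y hy)
  have hpw : Pat (u1 ++ u2) α := hstep2.1
  have hwx : ∀ e ∈ u1 ++ u2, e < x := hstep2.2
  -- positions
  obtain ⟨p1, r, rfl, hr⟩ := sub_split hsub
  obtain ⟨p2, q, rfl, hq⟩ := sub_split hr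
  set π : List ℕ := p1 ++ c :: (p2 ++ x :: q) with hπdef
  have hπ' : π = (p1 ++ c :: (p2 ++ [x])) ++ q := by simp [hπdef]
  obtain ⟨o, t, k, hk, hperm, hmax, hord, heq⟩ := split π _ q hπ' hnd (by simp)
  obtain ⟨hndq, hdisj1, hdisj2⟩ := nodup_big_parts hnd hπ' hperm
  have hxP : x ∈ p1 ++ c :: (p2 ++ [x]) := by simp
  have hcP : c ∈ p1 ++ c :: (p2 ++ [x]) := by simp
  have haq : a ∈ q := hq.subset (by rw [husplit]; simp)
  have hxnr : x ∉ List.range' t k := by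
    intro hxr
    -- then a's value lies in the stack interval: contradiction with a unread
    have har : a ∈ List.range' t k := by
      rw [List.mem_range'_1]
      have h1 := hmax c hcP
      have h2 := (List.mem_range'_1.mp hxr).1
      omega
    rw [List.nodup_append] at hndq
    exact hndq.2.2 a haq a har rfl
  obtain ⟨hxo, hxt⟩ := x_in_out hnd hπ' hperm hmax hxP hxnr
  have hw_q : u1 ++ u2 <+ q := by
    refine List.Sublist.trans ?_ hq
    rw [husplit]
    exact List.Sublist.append (List.Sublist.refl u1) (List.sublist_cons_self a u2)
  have hrun : u1 ++ u2 <+ psbAux q (List.range' t k) :=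
    bypass_run q t k (u1 ++ u2) x hk hndq hxt (mem_notin_q hnd hπ' hxP) hw_q hwx
  refine ⟨x :: (u1 ++ u2), ?_, ?_⟩
  · rw [heq]
    exact List.Sublist.append (List.singleton_sublist.mpr hxo) hrun
  · refine pat_cons_max ?_ hwx hαm hpw
    rw [hα12]
    simp [hlen1, hlen2, hm]

/-! ### Direction A helpers -/

lemma patG1 {b y n : ℕ} {w α : List ℕ} (hby : b < y)
    (hwb : ∀ e ∈ w, e < b) (hαm : ∀ e ∈ α, e < n) (hpw : Pat w α) :
    Pat (b :: y :: w) (n :: (n + 1) :: α) := by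
  have base : Pat ([b] ++ w) ([n] ++ α) := by
    have := pat_cons_max hpw.1 hwb hαm hpw
    simpa using this
  have pw : ∀ i, i < ([b] ++ w).length - 0 → True := fun _ _ => trivial
  have hmid := (pat_mid_iff (l1 := [b]) (r1 := [n]) (l2 := w) (r2 := α)
    (v := y) (w := n + 1) (by simp) hpw.1).mpr ⟨base, ?_⟩
  · simpa using hmid
  · intro i hi
    simp only [List.singleton_append, List.length_cons] at hi ⊢
    cases i with
    | zero =>
      simp only [List.getElem!_cons_zero]
      constructor
      · constructor <;> intro <;> omega
      · constructor <;> intro <;> omega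
    | succ i =>
      simp only [List.getElem!_cons_succ]
      have hiw : i < w.length := by simp at hi; omega
      have h1 := hwb _ (gx_mem w i hiw)
      have h2 := hαm _ (gx_mem α i (by rw [← hpw.1]; exact hiw))
      constructor
      · constructor <;> intro <;> omega
      · constructor <;> intro <;> omega

lemma patG2 {c b v n : ℕ} {w1 w2 α1 α2 : List ℕ}
    (hlen1 : w1.length = α1.length) (hlen2 : w2.length = α2.length)
    (hbc : b < c) (hbv : b < v) (hvc : v < c)
    (hwb : ∀ e ∈ w1 ++ w2, e < b) (hαm : ∀ e ∈ α1 ++ α2, e < n)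
    (hpw : Pat (w1 ++ w2) (α1 ++ α2)) :
    Pat (c :: b :: (w1 ++ v :: w2)) ((n + 2) :: n :: (α1 ++ (n + 1) :: α2)) := by
  have hlen : (w1 ++ w2).length = (α1 ++ α2).length := by simp [hlen1, hlen2]
  have inner : Pat (b :: (w1 ++ w2)) (n :: (α1 ++ α2)) :=
    pat_cons_max hlen hwb hαm hpw
  have outer : Pat (c :: b :: (w1 ++ w2)) ((n + 2) :: n :: (α1 ++ α2)) := by
    refine pat_cons_max (by simp [hlen]) ?_ ?_ inner
    · intro e he
      rcases List.mem_cons.mp he with rfl|he'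
      · exact hbc
      · have := hwb e he'; omega
    · intro e he
      rcases List.mem_cons.mp he with rfl|he'
      · omega
      · have := hαm e he'; omega
  have base : Pat ((c :: b :: w1) ++ w2) (((n + 2) :: n :: α1) ++ α2) := by
    simpa using outer
  have hmid := (pat_mid_iff (l1 := c :: b :: w1) (r1 := (n + 2) :: n :: α1)
    (l2 := w2) (r2 := α2) (v := v) (w := n + 1) (by simp [hlen1]) hlen2).mpr ⟨base, ?_⟩
  · simpa using hmid
  · intro i hi
    simp only [List.cons_append, List.length_cons] at hi ⊢
    match i with
    | 0 =>
      simp only [List.getElem!_cons_zero]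
      constructor
      · constructor <;> intro <;> omega
      · constructor <;> intro <;> omega
    | 1 =>
      simp only [List.getElem!_cons_succ, List.getElem!_cons_zero]
      constructor
      · constructor <;> intro <;> omega
      · constructor <;> intro <;> omega
    | (i+2) =>
      simp only [List.getElem!_cons_succ]
      have hiw : i < (w1 ++ w2).length := by
        simp only [List.length_append]
        omega
      have h1 := hwb _ (gx_mem (w1 ++ w2) i hiw)
      have h2 := hαm _ (gx_mem (α1 ++ α2) i (by rw [← hlen]; exact hiw))
      constructor
      · constructor <;> intro <;> omega
      · constructor <;> intro <;> omega

lemma insert_pos : ∀ (q w : List ℕ) (v : ℕ), v ∈ q → w <+ q → v ∉ w →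
    ∃ w1 w2, w = w1 ++ w2 ∧ (w1 ++ v :: w2) <+ q := by
  intro q
  induction q with
  | nil => intro w v hv; simp at hv
  | cons z q ih =>
    intro w v hv hw hvw
    by_cases hvz : v = z
    · subst hvz
      refine ⟨[], w, by simp, ?_⟩
      simp only [List.nil_append]
      refine List.cons_sublist_cons.mpr ?_
      rcases List.sublist_cons_iff.mp hw with h'|⟨r, rfl, hr⟩
      · exact h'
      · exact absurd (by simp : v ∈ v :: r) hvw
    · have hvq : v ∈ q := by
        rcases List.mem_cons.mp hv with h'|h'
        · exact absurd h' hvz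
        · exact h'
      rcases List.sublist_cons_iff.mp hw with h'|⟨r, rfl, hr⟩
      · obtain ⟨w1, w2, rfl, hsub⟩ := ih w v hvq h' hvw
        exact ⟨w1, w2, rfl, hsub.cons z⟩
      · obtain ⟨r1, r2, rfl, hsub⟩ := ih r v hvq hr (fun hc => hvw (by simp [hc]))
        refine ⟨z :: r1, r2, by simp, ?_⟩
        rw [List.cons_append]
        exact List.cons_sublist_cons.mpr hsub

lemma assembleG1 {π p q q1 q2 : List ℕ} {b y n : ℕ} {w α : List ℕ}
    (hnd : π.Nodup) (hπ : π = p ++ b :: q) (hq : q = q1 ++ y :: q2)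
    (hby : b < y) (hwq2 : ∀ e ∈ w, e ∈ q2) (hwq : w <+ q)
    (hwb : ∀ e ∈ w, e < b) (hαm : ∀ e ∈ α, e < n) (hpw : Pat w α) :
    Contains π (n :: (n + 1) :: α) := by
  have hndq : q.Nodup := by
    rw [hπ, List.nodup_append, List.nodup_cons] at hnd
    exact hnd.2.1.2
  have hw2 : w <+ q2 := by
    have hq' : q = (q1 ++ [y]) ++ q2 := by rw [hq]; simp
    rw [hq'] at hwq
    refine drop_left_gen hwq ?_
    intro e he hc
    rw [hq', List.nodup_append] at hndq
    exact hndq.2.2 e hc e (hwq2 e he) rfl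
  rw [_root_.contains_iff]
  refine ⟨b :: y :: w, ?_, patG1 hby hwb hαm hpw⟩
  rw [hπ]
  refine List.Sublist.trans ?_ (List.sublist_append_right p (b :: q))
  refine List.cons_sublist_cons.mpr ?_
  rw [hq, show q1 ++ y :: q2 = (q1 ++ [y]) ++ q2 by simp]
  have h1 : [y] <+ q1 ++ [y] := List.sublist_append_right _ _
  have := List.Sublist.append h1 hw2
  simpa using this

/-! ### Direction A main -/

lemma dirA_key {π : List ℕ} {m : ℕ} (hpl : IsPermList m π) {n : ℕ} {α : List ℕ}
    (hαm : ∀ y ∈ α, y < n) {w : List ℕ} (hwne : w ≠ []) (hpw : Pat w α) :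
    ∀ (d b : ℕ), m - b = d → (b :: w) <+ psb π → (∀ e ∈ w, e < b) →
    Contains π (n :: (n + 1) :: α) ∨
      ∃ τ, IsShuffle [n + 1] α τ ∧ τ ≠ (n + 1) :: α ∧ Contains π ((n + 2) :: n :: τ) := by
  have hndπ : π.Nodup := hpl.symm.nodup (List.nodup_range' (s := 1) (n := m))
  have hndpsb : (psb π).Nodup := (psb_perm π).symm.nodup hndπ
  have hπmem : ∀ x ∈ π, 1 ≤ x ∧ x < 1 + m := by
    intro x hx
    exact List.mem_range'_1.mp (hpl.subset hx)
  intro d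
  induction d using Nat.strong_induction_on with
  | _ d ih =>
  intro b hd hb hwb
  have hbπ : b ∈ π := (psb_perm π).subset (hb.subset (by simp))
  obtain ⟨p, q, hπeq⟩ := List.append_of_mem hbπ
  have hbq : b ∉ q := by
    have h' := hndπ
    rw [hπeq, List.nodup_append, List.nodup_cons] at h'
    exact h'.2.1.1
  have hwmem : ∀ e ∈ w, e ∈ q := by
    intro e he
    have hne : e ≠ b := by have := hwb e he; omega
    have heπ : e ∈ π := (psb_perm π).subset (hb.subset (by simp [he]))
    rw [hπeq] at heπ
    rcases List.mem_append.mp heπ with hep|heq'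
    · exfalso
      have h1 : [e, b] <+ π := by
        rw [hπeq]
        have := List.Sublist.append (List.singleton_sublist.mpr hep)
          (List.singleton_sublist.mpr (show b ∈ b :: q by simp))
        simpa using this
      have h2 : [b, e] <+ psb π := by
        refine List.Sublist.trans ?_ hb
        exact List.cons_sublist_cons.mpr (List.singleton_sublist.mpr he)
      exact order_asymm hndpsb h2 (f1 hndπ (hwb e he) h1)
    · rcases List.mem_cons.mp heq' with h'|h'
      · exact absurd h' hne
      · exact h'
  have hwπ : w <+ π := by
    refine chain_sublist hndπ w (fun e he => (psb_perm π).subset (hb.subset (by simp [he]))) ?_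
    refine occ_chain w b hb ?_
    intro x y hx hy hxy3
    have hxπ : x ∈ π := (psb_perm π).subset (hb.subset (by simp [hx]))
    have hyπ : y ∈ π := (psb_perm π).subset (hb.subset (by simp [hy]))
    have hnexy : x ≠ y := by
      have := hxy3.nodup hndpsb
      simp at this
      tauto
    rcases Nat.lt_trichotomy x y with hlt|heqq|hgt
    · exact f2 hndπ hxy3 hlt (hwb y hy)
    · exact absurd heqq hnexy
    · by_contra hc
      rcases order_total hndπ hxπ hyπ hnexy with h'|h'
      · exact hc h'
      · have h1 : [y, x] <+ psb π := f1 hndπ hgt h'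
        have h2 : [x, y] <+ psb π := (List.sublist_cons_self b [x, y]).trans hxy3
        exact order_asymm hndpsb h2 h1
  have hwq : w <+ q := by
    have hπeq' : π = (p ++ [b]) ++ q := by rw [hπeq]; simp
    rw [hπeq'] at hwπ
    refine drop_left_gen hwπ ?_
    intro e he hc
    have h' := hndπ
    rw [hπeq', List.nodup_append] at h'
    exact h'.2.2 e hc e (hwmem e he) rfl
  by_cases hpnil : p = []
  · -- b is the first element of π
    subst hpnil
    simp only [List.nil_append] at hπeq
    have hpsb : psb π = psbAux q (List.range' b 1) := by
      rw [hπeq, psb, psbAux_cons_nil, show List.range' b 1 = [b] from by simp]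
    have hndq1 : (q ++ List.range' b 1).Nodup := by
      have h' := hndπ
      rw [hπeq] at h'
      have : (b :: q).Perm (q ++ [b]) := (List.perm_append_singleton b q).symm
      have := this.nodup h'
      simpa using this
    have hb' : (b :: w) <+ psbAux q (List.range' b 1) := by rw [← hpsb]; exact hb
    obtain ⟨y, q1, q2, hq, hy, hq2⟩ := trigger q b 1 b w hndq1
      (by rw [List.mem_range'_1]; omega) hwne hwb hb'
    exact Or.inl (assembleG1 (p := []) hndπ (by simpa using hπeq) hq (by omega) hq2 hwq hwb hαm hpw)
  · obtain ⟨o, t, k, hk, hperm, hmax, hord, heq⟩ := split π p (b :: q) hπeq hndπ hpnil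
    obtain ⟨hndq, hdisj1, hdisj2⟩ := nodup_big_parts hndπ hπeq hperm
    have hbno : b ∉ o := fun hc => hdisj1 b hc (by simp)
    have hwno : ∀ e ∈ w, e ∉ o := fun e he hc => hdisj1 e hc (by simp [hwmem e he])
    have hbnr : b ∉ List.range' t k := by
      intro hc
      rw [List.nodup_append] at hndq
      exact hndq.2.2 b (show b ∈ b :: q by simp) b hc rfl
    have hwnr : ∀ e ∈ w, e ∉ List.range' t k := by
      intro e he hc
      rw [List.nodup_append] at hndq
      exact hndq.2.2 e (show e ∈ b :: q by simp [hwmem e he]) e hc rfl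
    obtain ⟨k0, rfl⟩ : ∃ k0, k = k0 + 1 := ⟨k - 1, by omega⟩
    rcases Nat.lt_trichotomy (b + 1) t with hcase|hcase|hcase
    · -- bypass
      have heq2 : psb π = o ++ b :: psbAux q (List.range' t (k0 + 1)) := by
        rw [heq, range'_cons, psbAux_bypass _ _ hcase, ← range'_cons]
      have hndq' : (q ++ List.range' t (k0 + 1)).Nodup := by
        have h' := hndq
        rw [List.cons_append, List.nodup_cons] at h'
        exact h'.2
      have hbwX : (b :: w) <+ b :: psbAux q (List.range' t (k0 + 1)) := by
        have h' := hb
        rw [heq2] at h'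
        refine drop_left_gen h' ?_
        intro e he
        rcases List.mem_cons.mp he with rfl|he'
        · exact hbno
        · exact hwno e he'
      have hwX : w <+ psbAux q (List.range' t (k0 + 1)) := by
        rcases List.sublist_cons_iff.mp hbwX with h'|⟨r, hr, hr'⟩
        · exfalso
          have hbmem : b ∈ psbAux q (List.range' t (k0 + 1)) := h'.subset (by simp)
          rcases List.mem_append.mp ((psbAux_perm q _).subset hbmem) with h''|h''
          · exact hbq h''
          · exact hbnr h''
        · rw [List.cons_eq_cons] at hr
          rw [hr.2]
          exact hr'
      by_cases hv : ∃ v, b < v ∧ v < t ∧ v ∈ q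
      · obtain ⟨v, hbv, hvt, hvq⟩ := hv
        have hvw : v ∉ w := fun hc => by have := hwb v hc; omega
        obtain ⟨w1, w2, hw12, hins⟩ := insert_pos q w v hvq hwq hvw
        by_cases hw1nil : w1 = []
        · -- G1 via the in-between element v
          left
          rw [_root_.contains_iff]
          refine ⟨b :: v :: w, ?_, patG1 hbv hwb hαm hpw⟩
          rw [hπeq]
          refine List.Sublist.trans ?_ (List.sublist_append_right p (b :: q))
          refine List.cons_sublist_cons.mpr ?_
          have h'' := hins
          rw [hw1nil, List.nil_append] at h''
          rw [hw12, hw1nil, List.nil_append]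
          exact h''
        · -- G2
          right
          have hwlen' : w1.length + w2.length = α.length := by
            have := hpw.1
            rw [hw12] at this
            simpa using this
          set α1 := α.take w1.length with hα1
          set α2 := α.drop w1.length with hα2
          have hα12 : α = α1 ++ α2 := (List.take_append_drop _ α).symm
          have hlen1 : w1.length = α1.length := by
            rw [hα1, List.length_take]
            omega
          have hlen2 : w2.length = α2.length := by
            rw [hα2, List.length_drop]
            omega
          have hpw' : Pat (w1 ++ w2) (α1 ++ α2) := by
            rw [← hw12, ← hα12]
            exact hpw
          refine ⟨α1 ++ (n + 1) :: α2, ⟨?_, ?_, ?_⟩, ?_, ?_⟩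
          · exact List.singleton_sublist.mpr (by simp)
          · rw [hα12]
            exact List.Sublist.append_left (List.sublist_cons_self (n + 1) α2) α1
          · refine List.Perm.trans List.perm_middle ?_
            rw [hα12]
            simp
          · -- τ ≠ (n+1) :: α
            intro hceq
            obtain ⟨a1, α1', hα1c⟩ : ∃ a1 α1', α1 = a1 :: α1' := by
              cases hα1cases : α1 with
              | nil =>
                exfalso
                rw [hα1cases] at hlen1
                simp at hlen1
                exact hw1nil hlen1
              | cons a1 α1' => exact ⟨a1, α1', rfl⟩
            rw [hα1c, List.cons_append, List.cons_eq_cons] at hceq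
            have ha1α : a1 ∈ α := by rw [hα12, hα1c]; simp
            have := hαm a1 ha1α
            omega
          · rw [_root_.contains_iff]
            set lv := t + k0 with hlv
            have hlmem : lv ∈ List.range' t (k0 + 1) := by
              rw [List.mem_range'_1]; omega
            have hlp : lv ∈ p := hperm.mem_iff.mp (List.mem_append.mpr (Or.inr hlmem))
            refine ⟨lv :: b :: (w1 ++ v :: w2), ?_, ?_⟩
            · rw [hπeq]
              have h1 : [lv] <+ p := List.singleton_sublist.mpr hlp
              have h2 : (b :: (w1 ++ v :: w2)) <+ b :: q := List.cons_sublist_cons.mpr hins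
              have := List.Sublist.append h1 h2
              simpa using this
            · refine patG2 hlen1 hlen2 (by omega) hbv (by omega) ?_ ?_ hpw'
              · intro e he
                rw [← hw12] at he
                exact hwb e he
              · intro e he
                rw [← hα12] at he
                exact hαm e he
      · -- no in-between element was read later: recurse on t - 1
        set v := t - 1 with hvdef
        have hbv : b < v := by omega
        have hvt : v < t := by omega
        have hvnq : v ∉ q := fun hc => hv ⟨v, hbv, hvt, hc⟩
        have hvπ : v ∈ π := by
          rw [hpl.mem_iff, List.mem_range'_1]
          have hb1 : 1 ≤ b := (hπmem b hbπ).1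
          have hlπ : t + k0 ∈ π := by
            rw [hπeq]
            refine List.mem_append.mpr (Or.inl ?_)
            exact hperm.mem_iff.mp (List.mem_append.mpr (Or.inr (by rw [List.mem_range'_1]; omega)))
          have := (hπmem _ hlπ).2
          omega
        have hvp : v ∈ p := by
          rw [hπeq] at hvπ
          rcases List.mem_append.mp hvπ with h'|h'
          · exact h'
          · rcases List.mem_cons.mp h' with h''|h''
            · omega
            · exact absurd h'' hvnq
        have hvo : v ∈ o := by
          rcases List.mem_append.mp (hperm.mem_iff.mpr hvp) with h'|h'
          · exact h'
          · exfalso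
            rw [List.mem_range'_1] at h'
            omega
        have hocc : (v :: w) <+ psb π := by
          rw [heq2]
          have h1 : [v] <+ o := List.singleton_sublist.mpr hvo
          have h2 : w <+ b :: psbAux q (List.range' t (k0 + 1)) := hwX.cons b
          have := List.Sublist.append h1 h2
          simpa using this
        have hvm : v < 1 + m := ((hπmem v hvπ)).2
        exact ih (m - v) (by omega) v rfl hocc (fun e he => by have := hwb e he; omega)
    · -- push
      have heq2 : psb π = o ++ psbAux q (List.range' b (k0 + 2)) := by
        rw [heq, range'_cons, psbAux_push _ _ hcase, ← range'_cons, range'_cons_down hcase]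
      have hndq2 : (q ++ List.range' b (k0 + 2)).Nodup := nodup_shift hndq hcase
      have hbwX : (b :: w) <+ psbAux q (List.range' b (k0 + 2)) := by
        have h' := hb
        rw [heq2] at h'
        refine drop_left_gen h' ?_
        intro e he
        rcases List.mem_cons.mp he with rfl|he'
        · exact hbno
        · exact hwno e he'
      obtain ⟨y, q1, q2, hq, hy, hq2⟩ := trigger q b (k0 + 2) b w hndq2
        (by rw [List.mem_range'_1]; omega) hwne hwb hbwX
      exact Or.inl (assembleG1 hndπ hπeq hq (by omega) hq2 hwq hwb hαm hpw)
    · -- flush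
      have hbig : t + (k0 + 1) ≤ b := flush_big hndq (by omega)
      have heq2 : psb π = (o ++ List.range' t (k0 + 1)) ++ psbAux q (List.range' b 1) := by
        rw [heq, range'_cons, psbAux_flush _ _ (by omega), ← range'_cons]
        rw [show ([b] : List ℕ) = List.range' b 1 by simp]
        simp
      have hndq3 : (q ++ List.range' b 1).Nodup := nodup_flushed hndq
      have hbwX : (b :: w) <+ psbAux q (List.range' b 1) := by
        have h' := hb
        rw [heq2] at h'
        refine drop_left_gen h' ?_
        intro e he hc
        rcases List.mem_append.mp hc with h''|h''
        · rcases List.mem_cons.mp he with rfl|he'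
          · exact hbno h''
          · exact hwno e he' h''
        · rcases List.mem_cons.mp he with rfl|he'
          · exact hbnr h''
          · exact hwnr e he' h''
      obtain ⟨y, q1, q2, hq, hy, hq2⟩ := trigger q b 1 b w hndq3
        (by rw [List.mem_range'_1]; omega) hwne hwb hbwX
      exact Or.inl (assembleG1 hndπ hπeq hq (by omega) hq2 hwq hwb hαm hpw)

/-! ### Main theorem -/

theorem psb_preimage_class_max_first (n : ℕ) (α : List ℕ)
    (hα : α.Perm (List.range' 1 (n - 1))) (hne : α ≠ []) :
    {π : List ℕ | (∃ m, IsPermList m π) ∧ Avoids (psb π) (n :: α)} =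
      {π : List ℕ | (∃ m, IsPermList m π) ∧ Avoids π (n :: (n + 1) :: α) ∧
        ∀ τ : List ℕ, IsShuffle [n + 1] α τ → τ ≠ (n + 1) :: α →
          Avoids π ((n + 2) :: n :: τ)} := by
  have hn : 2 ≤ n := by
    by_contra hc
    have : n - 1 = 0 := by omega
    rw [this] at hα
    simp at hα
    exact hne hα
  have hαm : ∀ y ∈ α, y < n := by
    intro y hy
    have := List.mem_range'_1.mp (hα.subset hy)
    omega
  have hαlen : α.length = n - 1 := by
    have := hα.length_eq
    simpa using this
  ext π
  simp only [Set.mem_setOf_eq]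
  constructor
  · rintro ⟨⟨m, hm⟩, hav⟩
    have hndπ : π.Nodup := hm.symm.nodup (List.nodup_range' (s := 1) (n := m))
    refine ⟨⟨m, hm⟩, ?_, ?_⟩
    · intro hcont
      exact hav (dirB1 hndπ hαm hcont)
    · intro τ hsh hτne hcont
      exact hav (dirB2 hndπ hαm hsh hcont)
  · rintro ⟨⟨m, hm⟩, h1, h2⟩
    refine ⟨⟨m, hm⟩, ?_⟩
    intro hcont
    rw [_root_.contains_iff] at hcont
    obtain ⟨τ0, hsub, hp⟩ := hcont
    obtain ⟨b, w, rfl⟩ : ∃ b w, τ0 = b :: w := by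
      cases τ0 with
      | nil =>
        exfalso
        have := hp.1
        simp at this
      | cons b w => exact ⟨b, w, rfl⟩
    obtain ⟨hpw, hwb⟩ := pat_cons_max_elim hp hαm
    have hwne : w ≠ [] := by
      intro hc
      have := hpw.1
      rw [hc] at this
      simp at this
      omega
    rcases dirA_key hm hαm hwne hpw (m - b) b rfl hsub hwb with hc1|⟨τ, hsh, hτne, hc2⟩
    · exact h1 hc1
    · exact h2 τ hsh hτne hc2
end

section
/- For a permutation π of size n, Queuesort(PSB(π)) = id_n if and only if π avoids all three patterns 3421, 53241, and 53214. -/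
/-- The (optimal) Queuesort procedure, using a queue with a bypass; the second
argument is the queue, front-first. -/
def queuesortAux : List ℕ → List ℕ → List ℕ
  | [], q => q
  | x :: xs, q =>
      match q.getLast? with
      | none => queuesortAux xs [x]
      | some b =>
          if b < x then queuesortAux xs (q ++ [x])
          else q.takeWhile (fun a => decide (a < x)) ++
            x :: queuesortAux xs (q.dropWhile (fun a => decide (a < x)))

/-- The map associated with Queuesort. -/
def queuesort (π : List ℕ) : List ℕ := queuesortAux π []

/-- One pass of Bubblesort: traverse left to right, swapping adjacent
out-of-order entries. -/
def bubblesort : List ℕ → List ℕ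
  | [] => []
  | [x] => [x]
  | x :: y :: xs => if x ≤ y then x :: bubblesort (y :: xs) else y :: bubblesort (x :: xs)

namespace PSBProof

open List

/-- a 321 pattern occurrence -/
def Des (l : List ℕ) : Prop := ∃ a b c : ℕ, [a,b,c] <+ l ∧ b < a ∧ c < b

def Occ3421 (l : List ℕ) : Prop := ∃ p q r s : ℕ, [p,q,r,s] <+ l ∧ s < r ∧ r < p ∧ p < q
def Occ53241 (l : List ℕ) : Prop := ∃ p q r s t : ℕ, [p,q,r,s,t] <+ l ∧ t < r ∧ r < q ∧ q < s ∧ s < p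
def Occ53214 (l : List ℕ) : Prop := ∃ p q r s t : ℕ, [p,q,r,s,t] <+ l ∧ s < r ∧ r < q ∧ q < t ∧ t < p

def OccAny (l : List ℕ) : Prop := Occ3421 l ∨ Occ53241 l ∨ Occ53214 l

lemma Des.mono {l l' : List ℕ} (h : Des l) (hs : l <+ l') : Des l' := by
  obtain ⟨a,b,c,h1,h2,h3⟩ := h; exact ⟨a,b,c,h1.trans hs,h2,h3⟩

lemma Occ3421.mono {l l' : List ℕ} (h : Occ3421 l) (hs : l <+ l') : Occ3421 l' := by
  obtain ⟨p,q,r,s,h1,h2⟩ := h; exact ⟨p,q,r,s,h1.trans hs,h2⟩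

lemma Occ53241.mono {l l' : List ℕ} (h : Occ53241 l) (hs : l <+ l') : Occ53241 l' := by
  obtain ⟨p,q,r,s,t,h1,h2⟩ := h; exact ⟨p,q,r,s,t,h1.trans hs,h2⟩

lemma Occ53214.mono {l l' : List ℕ} (h : Occ53214 l) (hs : l <+ l') : Occ53214 l' := by
  obtain ⟨p,q,r,s,t,h1,h2⟩ := h; exact ⟨p,q,r,s,t,h1.trans hs,h2⟩

lemma OccAny.mono {l l' : List ℕ} (h : OccAny l) (hs : l <+ l') : OccAny l' := by
  rcases h with h | h | h
  exacts [Or.inl (h.mono hs), Or.inr (Or.inl (h.mono hs)), Or.inr (Or.inr (h.mono hs))]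

/-! equations for psbAux -/
lemma psbAux_nil (s : List ℕ) : psbAux [] s = s := rfl
lemma psbAux_cons_nil (x : ℕ) (xs : List ℕ) : psbAux (x :: xs) [] = psbAux xs [x] := rfl
lemma psbAux_push {x t : ℕ} (xs s : List ℕ) (h : x + 1 = t) :
    psbAux (x :: xs) (t :: s) = psbAux xs (x :: t :: s) := by
  simp [psbAux, h]
lemma psbAux_bypass {x t : ℕ} (xs s : List ℕ) (h : x + 1 < t) :
    psbAux (x :: xs) (t :: s) = x :: psbAux xs (t :: s) := by
  have h' : x + 1 ≠ t := Nat.ne_of_lt h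
  simp [psbAux, h, h']
lemma psbAux_pop {x t : ℕ} (xs s : List ℕ) (h : t < x + 1) :
    psbAux (x :: xs) (t :: s) = (t :: s) ++ psbAux xs [x] := by
  have h1 : x + 1 ≠ t := by omega
  have h2 : ¬ (x + 1 < t) := by omega
  simp [psbAux, h1, h2]

lemma psbAux_perm : ∀ (xs s : List ℕ), psbAux xs s ~ xs ++ s := by
  intro xs
  induction xs with
  | nil => intro s; simp [psbAux_nil]
  | cons x xs ih =>
    intro s
    cases s with
    | nil =>
      rw [psbAux_cons_nil]
      refine (ih [x]).trans ?_
      simpa using (perm_append_comm (l₁ := xs) (l₂ := [x]))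
    | cons t s =>
      rcases Nat.lt_trichotomy (x+1) t with h | h | h
      · rw [psbAux_bypass xs s h]
        exact ((ih (t :: s)).cons x)
      · rw [psbAux_push xs s h]
        refine (ih (x :: t :: s)).trans ?_
        exact List.perm_middle
      · rw [psbAux_pop xs s h]
        calc (t :: s) ++ psbAux xs [x] ~ (t :: s) ++ (xs ++ [x]) := Perm.append_left _ (ih [x])
          _ ~ (xs ++ [x]) ++ (t :: s) := perm_append_comm
          _ ~ (x :: xs) ++ (t :: s) := by
              refine Perm.append_right _ ?_
              simpa using (perm_append_comm (l₁ := xs) (l₂ := [x]))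

lemma mem_psbAux {a : ℕ} {xs s : List ℕ} : a ∈ psbAux xs s ↔ a ∈ xs ∨ a ∈ s := by
  rw [(psbAux_perm xs s).mem_iff, List.mem_append]

lemma two_mem_sublist {a b : ℕ} : ∀ {l : List ℕ}, a ∈ l → b ∈ l → a = b ∨ [a,b] <+ l ∨ [b,a] <+ l := by
  intro l
  induction l with
  | nil => simp
  | cons x l ih =>
    intro ha hb
    rcases List.mem_cons.1 ha with rfl | ha'
    · rcases List.mem_cons.1 hb with rfl | hb'
      · exact Or.inl rfl
      · exact Or.inr (Or.inl ((List.cons_sublist_cons).2 (List.singleton_sublist.2 hb')))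
    · rcases List.mem_cons.1 hb with rfl | hb'
      · exact Or.inr (Or.inr ((List.cons_sublist_cons).2 (List.singleton_sublist.2 ha')))
      · rcases ih ha' hb' with h | h | h
        exacts [Or.inl h, Or.inr (Or.inl (h.cons _)), Or.inr (Or.inr (h.cons _))]

lemma sublist_of_sublist_single {l : List ℕ} {y : ℕ} (h : l <+ [y]) : l = [] ∨ l = [y] := by
  cases h with
  | cons _ h' => left; simpa using h'
  | cons_cons _ h' => right; simpa using h'

lemma pair_sublist_snoc {a b y : ℕ} {l : List ℕ} (h : [a,b] <+ l ++ [y]) (hb : b ≠ y) :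
    [a,b] <+ l := by
  rcases List.sublist_append_iff.1 h with ⟨l₁, l₂, heq, h1, h2⟩
  rcases sublist_of_sublist_single h2 with rfl | rfl
  · rw [List.append_nil] at heq; rw [heq]; exact h1
  · have hby : b = y := by
      cases l₁ with
      | nil => simp at heq
      | cons u l₁ =>
        cases l₁ with
        | nil => simp at heq; tauto
        | cons v l₁ =>
          have := congrArg List.length heq; simp at this
    exact absurd hby hb

lemma snoc_head_sublist {y c : ℕ} {l : List ℕ} (h : [y,c] <+ l ++ [y]) (hy : y ∉ l) : c = y := by
  rcases List.sublist_append_iff.1 h with ⟨l₁, l₂, heq, h1, h2⟩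
  rcases sublist_of_sublist_single h2 with rfl | rfl
  · rw [List.append_nil] at heq
    subst heq
    exact absurd (h1.subset (by simp)) hy
  · cases l₁ with
    | nil => simp at heq
    | cons u l₁ =>
      cases l₁ with
      | nil =>
        simp at heq
        exact absurd (heq.1 ▸ h1.subset (by simp)) hy
      | cons v l₁ =>
        have := congrArg List.length heq; simp at this

end PSBProof

namespace PSBProof
open List

lemma step_facts {st rest : List ℕ} {y : ℕ} (h : (st ++ y :: rest).Nodup) :
    y ∉ st ∧ y ∉ rest ∧ (st ++ rest).Nodup := by
  have h2 := (List.perm_middle (a := y) (l₁ := st) (l₂ := rest)).nodup h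
  rw [List.nodup_cons, List.mem_append] at h2
  tauto

lemma nodup_push_step {st rest : List ℕ} {y : ℕ} (h : (st ++ y :: rest).Nodup) :
    ((y :: st) ++ rest).Nodup := by
  have h2 := (List.perm_middle (a := y) (l₁ := st) (l₂ := rest)).nodup h
  rw [List.cons_append]
  exact h2

lemma nodup_pop_step {st rest : List ℕ} {y : ℕ} (h : (st ++ y :: rest).Nodup) :
    ([y] ++ rest).Nodup :=
  (List.sublist_append_right st (y :: rest)).nodup h

lemma lemA (B r s : ℕ) (hrB : r < B) (hsr : s < r) :
    ∀ (rest : List ℕ) (α k : ℕ), 1 ≤ k →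
    (List.range' α k ++ rest).Nodup →
    B ∉ List.range' α k → B ∉ rest → B ≤ α + k - 1 →
    [r, s] <+ rest →
    [r, s] <+ psbAux rest (List.range' α k) := by
  intro rest
  induction rest with
  | nil =>
    intro α k hk hnd hB1 hB2 hBmax hsub
    simp at hsub
  | cons y rest ih =>
    intro α k hk hnd hB1 hB2 hBmax hsub
    obtain ⟨k', rfl⟩ : ∃ k', k = k' + 1 := ⟨k - 1, by omega⟩
    have hst : List.range' α (k'+1) = α :: List.range' (α+1) k' := List.range'_succ ..
    obtain ⟨hyst, hyrest, hnd'⟩ := step_facts hnd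
    have hByrest : B ∉ rest := fun hc => hB2 (List.mem_cons_of_mem _ hc)
    have hBy : B ≠ y := fun hc => hB2 (hc ▸ List.mem_cons_self)
    -- where is B: B < α since B ∉ st, B ≤ max
    have hBlt : B < α := by
      by_contra hcon
      exact hB1 (List.mem_range'_1.2 ⟨by omega, by omega⟩)
    rcases List.sublist_cons_iff.1 hsub with hs' | ⟨rr, heq, hs0⟩
    case cons.inr =>
      -- y = r
      have hy : y = r := by cases heq; rfl
      subst hy
      have hrr : rr = [s] := by cases heq; rfl
      subst hrr
      have hrα : y + 1 < α := by omega
      rw [hst, psbAux_bypass _ _ hrα, ← hst]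
      refine List.cons_sublist_cons.2 (List.singleton_sublist.2 ?_)
      exact mem_psbAux.2 (Or.inl (hs0.subset (by simp)))
    case cons.inl =>
      rcases Nat.lt_trichotomy (y+1) α with h | h | h
      · -- bypass
        rw [hst, psbAux_bypass _ _ h, ← hst]
        exact (ih α (k'+1) hk hnd' hB1 hByrest hBmax hs').cons y
      · -- push
        rw [hst, psbAux_push _ _ h]
        have hst2 : List.range' y (k'+2) = y :: α :: List.range' (α+1) k' := by
          rw [List.range'_succ, h, ← hst]
        rw [← hst2]
        refine ih y (k'+2) (by omega) ?_ ?_ hByrest (by omega) hs'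
        · rw [hst2, ← hst]; exact (List.perm_middle.nodup hnd)
        · rw [hst2, ← hst]
          intro hc
          rcases List.mem_cons.1 hc with hc | hc
          exacts [hBy hc, hB1 hc]
      · -- pop
        have hymax : α + k' < y := by
          by_contra hcon
          exact hyst (List.mem_range'_1.2 ⟨by omega, by omega⟩)
        rw [hst, psbAux_pop _ _ h]
        have h1 : [r, s] <+ psbAux rest [y] := by
          have := ih y 1 (by omega) (nodup_pop_step hnd) ?_ hByrest (by omega) hs'
          · simpa using this
          · simp; omega
        exact h1.trans (List.sublist_append_right _ _)


lemma lemB (p q r s : ℕ) (h1 : s < r) (h2 : r < p) (h3 : p < q) :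
    ∀ (rest : List ℕ) (α k : ℕ), 1 ≤ k →
    (List.range' α k ++ rest).Nodup → p ∉ rest →
    (p ∈ List.range' α k ∨ (p ∉ List.range' α k ∧ p < α + k - 1)) →
    [q,r,s] <+ rest →
    Des (psbAux rest (List.range' α k)) ∨
      (p ∉ List.range' α k ∧ ∃ b c : ℕ, [b,c] <+ psbAux rest (List.range' α k) ∧ c < b ∧ b < p) := by
  intro rest
  induction rest with
  | nil => intro α k hk _ _ _ hsub; simp at hsub
  | cons y rest ih =>
    intro α k hk hnd hprest hpinv hsub
    obtain ⟨k', rfl⟩ : ∃ k', k = k' + 1 := ⟨k - 1, by omega⟩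
    have hst : List.range' α (k'+1) = α :: List.range' (α+1) k' := List.range'_succ ..
    obtain ⟨hyst, hyrest, hnd'⟩ := step_facts hnd
    have hprest' : p ∉ rest := fun hc => hprest (List.mem_cons_of_mem _ hc)
    have hpy : p ≠ y := fun hc => hprest (hc ▸ List.mem_cons_self)
    rcases List.sublist_cons_iff.1 hsub with hs' | ⟨rr, heq, hs0⟩
    · -- generic step
      rcases Nat.lt_trichotomy (y+1) α with h | h | h
      · -- bypass
        rw [hst, psbAux_bypass _ _ h, ← hst]
        rcases ih α (k'+1) hk hnd' hprest' hpinv hs' with hD | ⟨hp1, b, c, hbc, hc, hb⟩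
        · exact Or.inl (hD.mono (List.sublist_cons_self _ _))
        · exact Or.inr ⟨hp1, b, c, hbc.trans (List.sublist_cons_self _ _), hc, hb⟩
      · -- push
        rw [hst, psbAux_push _ _ h]
        have hst2 : List.range' y (k'+2) = y :: α :: List.range' (α+1) k' := by
          rw [List.range'_succ, h, ← hst]
        rw [← hst2]
        have hmem : ∀ m, m ∈ List.range' y (k'+2) ↔ (m = y ∨ m ∈ List.range' α (k'+1)) := by
          intro m
          rw [hst2]
          rw [hst]
          simp [List.mem_cons]
        have hinv2 : p ∈ List.range' y (k'+2) ∨ (p ∉ List.range' y (k'+2) ∧ p < y + (k'+2) - 1) := by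
          rcases hpinv with hp | ⟨hp1, hp2⟩
          · exact Or.inl ((hmem p).2 (Or.inr hp))
          · right
            refine ⟨fun hc => ?_, by omega⟩
            rcases (hmem p).1 hc with hc2 | hc2
            exacts [hpy hc2, hp1 hc2]
        have hnd2 : (List.range' y (k'+2) ++ rest).Nodup := by
          rw [hst2, ← hst]; exact List.perm_middle.nodup hnd
        rcases ih y (k'+2) (by omega) hnd2 hprest' hinv2 hs' with hD | ⟨hp1, b, c, hbc, hc, hb⟩
        · exact Or.inl hD
        · exact Or.inr ⟨fun hc => hp1 ((hmem p).2 (Or.inr hc)), b, c, hbc, hc, hb⟩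
      · -- pop
        have hymax : α + k' < y := by
          by_contra hcon
          exact hyst (List.mem_range'_1.2 ⟨by omega, by omega⟩)
        have hpmax : p ≤ α + k' := by
          rcases hpinv with hp | ⟨_, hp2⟩
          · have := List.mem_range'_1.1 hp; omega
          · omega
        rw [hst, psbAux_pop _ _ h, ← hst]
        have hinv2 : p ∈ List.range' y 1 ∨ (p ∉ List.range' y 1 ∧ p < y + 1 - 1) := by
          right
          constructor
          · rw [List.range'_one]; simp; omega
          · omega
        have hnd2 : (List.range' y 1 ++ rest).Nodup := by
          rw [List.range'_one]; exact nodup_pop_step hnd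
        rcases ih y 1 (by omega) hnd2 hprest' hinv2 hs' with hD | ⟨_, b, c, hbc, hc, hb⟩
        · exact Or.inl (hD.mono (List.sublist_append_right _ _))
        · by_cases hpst : p ∈ List.range' α (k'+1)
          · refine Or.inl ⟨p, b, c, ?_, hb, hc⟩
            have : [p] ++ [b,c] <+ List.range' α (k'+1) ++ psbAux rest (List.range' y 1) :=
              List.Sublist.append (List.singleton_sublist.2 hpst) hbc
            simpa using this
          · exact Or.inr ⟨hpst, b, c, hbc.trans (List.sublist_append_right _ _), hc, hb⟩
    · -- y = q
      have hyq : y = q := by cases heq; rfl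
      subst hyq
      have hrr : rr = [r,s] := by cases heq; rfl
      subst hrr
      by_cases hpst : p ∈ List.range' α (k'+1)
      · -- q > max: pop
        have hpa := List.mem_range'_1.1 hpst
        have hq1 : α < y + 1 := by omega
        have hymax : α + k' < y := by
          by_contra hcon
          exact hyst (List.mem_range'_1.2 ⟨by omega, by omega⟩)
        rw [hst, psbAux_pop _ _ hq1, ← hst]
        have hnd2 : (List.range' y 1 ++ rest).Nodup := by
          rw [List.range'_one]; exact nodup_pop_step hnd
        have hrs : [r,s] <+ psbAux rest (List.range' y 1) := by
          refine lemA p r s h2 h1 rest y 1 (by omega) hnd2 ?_ hprest' (by omega) hs0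
          rw [List.range'_one]; simp; omega
        refine Or.inl ⟨p, r, s, ?_, h2, h1⟩
        have : [p] ++ [r,s] <+ List.range' α (k'+1) ++ psbAux rest (List.range' y 1) :=
          List.Sublist.append (List.singleton_sublist.2 hpst) hrs
        simpa using this
      · have hpmax : p < α + k' + 1 - 1 := by
          rcases hpinv with hp | ⟨_, hp2⟩
          · exact absurd hp hpst
          · omega
        have hpα : p < α := by
          by_contra hcon
          exact hpst (List.mem_range'_1.2 ⟨by omega, by omega⟩)
        rcases Nat.lt_trichotomy (y+1) α with h | h | h
        · -- bypass q
          rw [hst, psbAux_bypass _ _ h, ← hst]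
          have hrs : [r,s] <+ psbAux rest (List.range' α (k'+1)) := by
            refine lemA y r s (by omega) h1 rest α (k'+1) hk hnd' ?_ hyrest (by omega) hs0
            intro hc; exact absurd (List.mem_range'_1.1 hc).1 (by omega)
          exact Or.inl ⟨y, r, s, List.cons_sublist_cons.2 hrs, by omega, h1⟩
        · -- push q
          rw [hst, psbAux_push _ _ h]
          have hst2 : List.range' y (k'+2) = y :: α :: List.range' (α+1) k' := by
            rw [List.range'_succ, h, ← hst]
          rw [← hst2]
          have hrs : [r,s] <+ psbAux rest (List.range' y (k'+2)) := by
            refine lemA p r s h2 h1 rest y (k'+2) (by omega) ?_ ?_ hprest' (by omega) hs0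
            · rw [hst2, ← hst]; exact List.perm_middle.nodup hnd
            · intro hc; have := List.mem_range'_1.1 hc; omega
          exact Or.inr ⟨hpst, r, s, hrs, h1, h2⟩
        · -- pop with q trigger
          have hymax : α + k' < y := by
            by_contra hcon
            exact hyst (List.mem_range'_1.2 ⟨by omega, by omega⟩)
          rw [hst, psbAux_pop _ _ h, ← hst]
          have hnd2 : (List.range' y 1 ++ rest).Nodup := by
            rw [List.range'_one]; exact nodup_pop_step hnd
          have hrs : [r,s] <+ psbAux rest (List.range' y 1) := by
            refine lemA p r s h2 h1 rest y 1 (by omega) hnd2 ?_ hprest' (by omega) hs0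
            rw [List.range'_one]; simp; omega
          exact Or.inr ⟨hpst, r, s, hrs.trans (List.sublist_append_right _ _), h1, h2⟩


lemma lemB5 (p q r a b : ℕ)
    (hcase : (b < r ∧ r < q ∧ q < a ∧ a < p) ∨ (a < r ∧ r < q ∧ q < b ∧ b < p)) :
    ∀ (rest : List ℕ) (α k : ℕ), 1 ≤ k →
    (List.range' α k ++ rest).Nodup → p ∉ rest →
    (p ∈ List.range' α k ∨ (p ∉ List.range' α k ∧ p < α + k - 1)) →
    [q,r,a,b] <+ rest →
    Des (psbAux rest (List.range' α k)) ∨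
      (p ∉ List.range' α k ∧ ∃ u v : ℕ, [u,v] <+ psbAux rest (List.range' α k) ∧ v < u ∧ u < p) := by
  have hrq : r < q := by rcases hcase with ⟨_,h,_,_⟩ | ⟨_,h,_,_⟩ <;> exact h
  have hqp : q < p := by rcases hcase with ⟨_,_,h3,h4⟩ | ⟨_,_,h3,h4⟩ <;> omega
  intro rest
  induction rest with
  | nil => intro α k hk _ _ _ hsub; simp at hsub
  | cons y rest ih =>
    intro α k hk hnd hprest hpinv hsub
    obtain ⟨k', rfl⟩ : ∃ k', k = k' + 1 := ⟨k - 1, by omega⟩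
    have hst : List.range' α (k'+1) = α :: List.range' (α+1) k' := List.range'_succ ..
    obtain ⟨hyst, hyrest, hnd'⟩ := step_facts hnd
    have hprest' : p ∉ rest := fun hc => hprest (List.mem_cons_of_mem _ hc)
    have hpy : p ≠ y := fun hc => hprest (hc ▸ List.mem_cons_self)
    rcases List.sublist_cons_iff.1 hsub with hs' | ⟨rr, heq, hs0⟩
    · -- generic step
      rcases Nat.lt_trichotomy (y+1) α with h | h | h
      · rw [hst, psbAux_bypass _ _ h, ← hst]
        rcases ih α (k'+1) hk hnd' hprest' hpinv hs' with hD | ⟨hp1, u, v, hbc, hc, hb⟩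
        · exact Or.inl (hD.mono (List.sublist_cons_self _ _))
        · exact Or.inr ⟨hp1, u, v, hbc.trans (List.sublist_cons_self _ _), hc, hb⟩
      · rw [hst, psbAux_push _ _ h]
        have hst2 : List.range' y (k'+2) = y :: α :: List.range' (α+1) k' := by
          rw [List.range'_succ, h, ← hst]
        rw [← hst2]
        have hmem : ∀ m, m ∈ List.range' y (k'+2) ↔ (m = y ∨ m ∈ List.range' α (k'+1)) := by
          intro m
          rw [hst2]
          rw [hst]
          simp [List.mem_cons]
        have hinv2 : p ∈ List.range' y (k'+2) ∨ (p ∉ List.range' y (k'+2) ∧ p < y + (k'+2) - 1) := by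
          rcases hpinv with hp | ⟨hp1, hp2⟩
          · exact Or.inl ((hmem p).2 (Or.inr hp))
          · right
            refine ⟨fun hc => ?_, by omega⟩
            rcases (hmem p).1 hc with hc2 | hc2
            exacts [hpy hc2, hp1 hc2]
        have hnd2 : (List.range' y (k'+2) ++ rest).Nodup := by
          rw [hst2, ← hst]; exact List.perm_middle.nodup hnd
        rcases ih y (k'+2) (by omega) hnd2 hprest' hinv2 hs' with hD | ⟨hp1, u, v, hbc, hc, hb⟩
        · exact Or.inl hD
        · exact Or.inr ⟨fun hc => hp1 ((hmem p).2 (Or.inr hc)), u, v, hbc, hc, hb⟩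
      · have hymax : α + k' < y := by
          by_contra hcon
          exact hyst (List.mem_range'_1.2 ⟨by omega, by omega⟩)
        have hpmax : p ≤ α + k' := by
          rcases hpinv with hp | ⟨_, hp2⟩
          · have := List.mem_range'_1.1 hp; omega
          · omega
        rw [hst, psbAux_pop _ _ h, ← hst]
        have hinv2 : p ∈ List.range' y 1 ∨ (p ∉ List.range' y 1 ∧ p < y + 1 - 1) := by
          right
          constructor
          · rw [List.range'_one]; simp; omega
          · omega
        have hnd2 : (List.range' y 1 ++ rest).Nodup := by
          rw [List.range'_one]; exact nodup_pop_step hnd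
        rcases ih y 1 (by omega) hnd2 hprest' hinv2 hs' with hD | ⟨_, u, v, hbc, hc, hb⟩
        · exact Or.inl (hD.mono (List.sublist_append_right _ _))
        · by_cases hpst : p ∈ List.range' α (k'+1)
          · refine Or.inl ⟨p, u, v, ?_, hb, hc⟩
            have : [p] ++ [u,v] <+ List.range' α (k'+1) ++ psbAux rest (List.range' y 1) :=
              List.Sublist.append (List.singleton_sublist.2 hpst) hbc
            simpa using this
          · exact Or.inr ⟨hpst, u, v, hbc.trans (List.sublist_append_right _ _), hc, hb⟩
    · -- y = q
      have hyq : y = q := by cases heq; rfl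
      subst hyq
      have hrr : rr = [r,a,b] := by cases heq; rfl
      subst hrr
      -- a and b are in rest
      have hamem : a ∈ rest := hs0.subset (by simp)
      have hbmem : b ∈ rest := hs0.subset (by simp)
      rcases Nat.lt_trichotomy (y+1) α with h | h | h
      · -- bypass q: find [r, v] with v the small one
        rw [hst, psbAux_bypass _ _ h, ← hst]
        have hrv : ∃ v, v < r ∧ [r,v] <+ rest := by
          rcases hcase with ⟨hb1,_,_,_⟩ | ⟨ha1,_,_,_⟩
          · refine ⟨b, hb1, List.Sublist.trans ?_ hs0⟩
            refine List.cons_sublist_cons.2 ?_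
            exact (List.singleton_sublist.2 (by simp))
          · refine ⟨a, ha1, List.Sublist.trans ?_ hs0⟩
            refine List.cons_sublist_cons.2 ?_
            exact (List.singleton_sublist.2 (by simp))
        obtain ⟨v, hv1, hv2⟩ := hrv
        have hrs : [r,v] <+ psbAux rest (List.range' α (k'+1)) := by
          refine lemA y r v (by omega) hv1 rest α (k'+1) hk hnd' ?_ hyrest (by omega) hv2
          intro hc; exact absurd (List.mem_range'_1.1 hc).1 (by omega)
        exact Or.inl ⟨y, r, v, List.cons_sublist_cons.2 hrs, by omega, hv1⟩
      · -- push q: impossible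
        exfalso
        rcases hpinv with hp | ⟨hp1, hp2⟩
        · -- p in stack, witness z in (q,p) must be in stack: contradiction with z ∈ rest
          have hpa := List.mem_range'_1.1 hp
          rcases hcase with ⟨_,_,hqa,hap⟩ | ⟨_,_,hqb,hbp⟩
          · have : a ∈ List.range' α (k'+1) := List.mem_range'_1.2 ⟨by omega, by omega⟩
            have hdisj := (List.nodup_append.1 hnd).2.2
            exact hdisj _ this _ (List.mem_cons_of_mem _ hamem) rfl
          · have : b ∈ List.range' α (k'+1) := List.mem_range'_1.2 ⟨by omega, by omega⟩
            have hdisj := (List.nodup_append.1 hnd).2.2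
            exact hdisj _ this _ (List.mem_cons_of_mem _ hbmem) rfl
        · -- p not in stack but q < p < max: p ∈ stack, contra
          exact hp1 (List.mem_range'_1.2 ⟨by omega, by omega⟩)
      · -- pop q: impossible since max < q < p but p ≤ max
        exfalso
        have hymax : α + k' < y := by
          by_contra hcon
          exact hyst (List.mem_range'_1.2 ⟨by omega, by omega⟩)
        rcases hpinv with hp | ⟨_, hp2⟩
        · have := List.mem_range'_1.1 hp; omega
        · omega

lemma lemC (p q r s : ℕ) (h1 : s < r) (h2 : r < p) (h3 : p < q) :
    ∀ (rest st : List ℕ) (α k : ℕ), st = List.range' α k →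
    (st ++ rest).Nodup → [p,q,r,s] <+ rest → Des (psbAux rest st) := by
  intro rest
  induction rest with
  | nil => intro st α k _ _ hsub; simp at hsub
  | cons y rest ih =>
    intro st α k hstd hnd hsub
    subst hstd
    obtain ⟨hyst, hyrest, hnd'⟩ := step_facts hnd
    rcases List.sublist_cons_iff.1 hsub with hs' | ⟨rr, heq, hs0⟩
    · -- y is not p (or at least occurrence is inside rest)
      cases k with
      | zero =>
        rw [show List.range' α 0 = [] from rfl] at *
        rw [psbAux_cons_nil]
        exact ih [y] y 1 (by rw [List.range'_one]) (by simpa using hnd) hs'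
      | succ k' =>
        have hst : List.range' α (k'+1) = α :: List.range' (α+1) k' := List.range'_succ ..
        rcases Nat.lt_trichotomy (y+1) α with h | h | h
        · rw [hst, psbAux_bypass _ _ h, ← hst]
          exact (ih _ α (k'+1) rfl hnd' hs').mono (List.sublist_cons_self _ _)
        · rw [hst, psbAux_push _ _ h]
          have hst2 : List.range' y (k'+2) = y :: α :: List.range' (α+1) k' := by
            rw [List.range'_succ, h, ← hst]
          rw [← hst2]
          refine ih _ y (k'+2) rfl ?_ hs'
          rw [hst2, ← hst]; exact List.perm_middle.nodup hnd
        · rw [hst, psbAux_pop _ _ h, ← hst]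
          have hnd2 : (List.range' y 1 ++ rest).Nodup := by
            rw [List.range'_one]; exact nodup_pop_step hnd
          exact (ih _ y 1 (by rw [List.range'_one]) hnd2 hs').mono (List.sublist_append_right _ _)
    · -- y = p
      have hyp : y = p := by cases heq; rfl
      subst hyp
      have hrr : rr = [q,r,s] := by cases heq; rfl
      subst hrr
      cases k with
      | zero =>
        rw [show List.range' α 0 = [] from rfl] at *
        rw [psbAux_cons_nil]
        have := lemB y q r s h1 h2 h3 rest y 1 (by omega) (by rw [List.range'_one]; simpa using hnd) hyrest (Or.inl (by rw [List.range'_one]; simp)) hs0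
        rcases this with hD | ⟨hp1, _⟩
        · exact hD
        · exact absurd (by rw [List.range'_one]; simp) hp1
      | succ k' =>
        have hst : List.range' α (k'+1) = α :: List.range' (α+1) k' := List.range'_succ ..
        rcases Nat.lt_trichotomy (y+1) α with h | h | h
        · -- p bypassed
          rw [hst, psbAux_bypass _ _ h, ← hst]
          have := lemB y q r s h1 h2 h3 rest α (k'+1) (by omega) hnd' hyrest ?_ hs0
          · rcases this with hD | ⟨_, u, v, huv, hvu, hup⟩
            · exact hD.mono (List.sublist_cons_self _ _)
            · exact ⟨y, u, v, List.cons_sublist_cons.2 huv, hup, hvu⟩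
          · right
            constructor
            · exact hyst
            · have : α ≤ α + k' := by omega
              omega
        · -- p pushed
          rw [hst, psbAux_push _ _ h]
          have hst2 : List.range' y (k'+2) = y :: α :: List.range' (α+1) k' := by
            rw [List.range'_succ, h, ← hst]
          rw [← hst2]
          have hnd2 : (List.range' y (k'+2) ++ rest).Nodup := by
            rw [hst2, ← hst]; exact List.perm_middle.nodup hnd
          have := lemB y q r s h1 h2 h3 rest y (k'+2) (by omega) hnd2 hyrest (Or.inl (List.mem_range'_1.2 ⟨by omega, by omega⟩)) hs0
          rcases this with hD | ⟨hp1, _⟩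
          · exact hD
          · exact absurd (List.mem_range'_1.2 ⟨by omega, by omega⟩) hp1
        · -- pop triggered by p
          rw [hst, psbAux_pop _ _ h, ← hst]
          have hnd2 : (List.range' y 1 ++ rest).Nodup := by
            rw [List.range'_one]; exact nodup_pop_step hnd
          have := lemB y q r s h1 h2 h3 rest y 1 (by omega) hnd2 hyrest (Or.inl (by rw [List.range'_one]; simp)) hs0
          rcases this with hD | ⟨hp1, _⟩
          · exact hD.mono (List.sublist_append_right _ _)
          · exact absurd (by rw [List.range'_one]; simp) hp1

lemma lemC5 (p q r a b : ℕ)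
    (hcase : (b < r ∧ r < q ∧ q < a ∧ a < p) ∨ (a < r ∧ r < q ∧ q < b ∧ b < p)) :
    ∀ (rest st : List ℕ) (α k : ℕ), st = List.range' α k →
    (st ++ rest).Nodup → [p,q,r,a,b] <+ rest → Des (psbAux rest st) := by
  intro rest
  induction rest with
  | nil => intro st α k _ _ hsub; simp at hsub
  | cons y rest ih =>
    intro st α k hstd hnd hsub
    subst hstd
    obtain ⟨hyst, hyrest, hnd'⟩ := step_facts hnd
    rcases List.sublist_cons_iff.1 hsub with hs' | ⟨rr, heq, hs0⟩
    · cases k with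
      | zero =>
        rw [show List.range' α 0 = [] from rfl] at *
        rw [psbAux_cons_nil]
        exact ih [y] y 1 (by rw [List.range'_one]) (by simpa using hnd) hs'
      | succ k' =>
        have hst : List.range' α (k'+1) = α :: List.range' (α+1) k' := List.range'_succ ..
        rcases Nat.lt_trichotomy (y+1) α with h | h | h
        · rw [hst, psbAux_bypass _ _ h, ← hst]
          exact (ih _ α (k'+1) rfl hnd' hs').mono (List.sublist_cons_self _ _)
        · rw [hst, psbAux_push _ _ h]
          have hst2 : List.range' y (k'+2) = y :: α :: List.range' (α+1) k' := by
            rw [List.range'_succ, h, ← hst]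
          rw [← hst2]
          refine ih _ y (k'+2) rfl ?_ hs'
          rw [hst2, ← hst]; exact List.perm_middle.nodup hnd
        · rw [hst, psbAux_pop _ _ h, ← hst]
          have hnd2 : (List.range' y 1 ++ rest).Nodup := by
            rw [List.range'_one]; exact nodup_pop_step hnd
          exact (ih _ y 1 (by rw [List.range'_one]) hnd2 hs').mono (List.sublist_append_right _ _)
    · -- y = p
      have hyp : y = p := by cases heq; rfl
      subst hyp
      have hrr : rr = [q,r,a,b] := by cases heq; rfl
      subst hrr
      cases k with
      | zero =>
        rw [show List.range' α 0 = [] from rfl] at *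
        rw [psbAux_cons_nil]
        have := lemB5 y q r a b hcase rest y 1 (by omega) (by rw [List.range'_one]; simpa using hnd) hyrest (Or.inl (by rw [List.range'_one]; simp)) hs0
        rcases this with hD | ⟨hp1, _⟩
        · exact hD
        · exact absurd (by rw [List.range'_one]; simp) hp1
      | succ k' =>
        have hst : List.range' α (k'+1) = α :: List.range' (α+1) k' := List.range'_succ ..
        rcases Nat.lt_trichotomy (y+1) α with h | h | h
        · rw [hst, psbAux_bypass _ _ h, ← hst]
          have := lemB5 y q r a b hcase rest α (k'+1) (by omega) hnd' hyrest ?_ hs0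
          · rcases this with hD | ⟨_, u, v, huv, hvu, hup⟩
            · exact hD.mono (List.sublist_cons_self _ _)
            · exact ⟨y, u, v, List.cons_sublist_cons.2 huv, hup, hvu⟩
          · right
            constructor
            · exact hyst
            · have : α ≤ α + k' := by omega
              omega
        · rw [hst, psbAux_push _ _ h]
          have hst2 : List.range' y (k'+2) = y :: α :: List.range' (α+1) k' := by
            rw [List.range'_succ, h, ← hst]
          rw [← hst2]
          have hnd2 : (List.range' y (k'+2) ++ rest).Nodup := by
            rw [hst2, ← hst]; exact List.perm_middle.nodup hnd
          have := lemB5 y q r a b hcase rest y (k'+2) (by omega) hnd2 hyrest (Or.inl (List.mem_range'_1.2 ⟨by omega, by omega⟩)) hs0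
          rcases this with hD | ⟨hp1, _⟩
          · exact hD
          · exact absurd (List.mem_range'_1.2 ⟨by omega, by omega⟩) hp1
        · rw [hst, psbAux_pop _ _ h, ← hst]
          have hnd2 : (List.range' y 1 ++ rest).Nodup := by
            rw [List.range'_one]; exact nodup_pop_step hnd
          have := lemB5 y q r a b hcase rest y 1 (by omega) hnd2 hyrest (Or.inl (by rw [List.range'_one]; simp)) hs0
          rcases this with hD | ⟨hp1, _⟩
          · exact hD.mono (List.sublist_append_right _ _)
          · exact absurd (by rw [List.range'_one]; simp) hp1

lemma occAny_des {l : List ℕ} (hnd : l.Nodup) (h : OccAny l) : Des (psb l) := by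
  rcases h with ⟨p,q,r,s,hsub,e1,e2,e3⟩ | ⟨p,q,r,s,t,hsub,e1,e2,e3,e4⟩ | ⟨p,q,r,s,t,hsub,e1,e2,e3,e4⟩
  · exact lemC p q r s e1 e2 e3 l [] 0 0 rfl (by simpa using hnd) hsub
  · exact lemC5 p q r s t (Or.inl ⟨e1,e2,e3,e4⟩) l [] 0 0 rfl (by simpa using hnd) hsub
  · exact lemC5 p q r s t (Or.inr ⟨e1,e2,e3,e4⟩) l [] 0 0 rfl (by simpa using hnd) hsub


/-! ### Direction 1: a 321 in the psb output yields a forbidden pattern -/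

/-- Run invariant: any already-output element `c` that was processed after some
current stack element `s` entered the stack must satisfy `c + 1 < s`. -/
def InvB (C st : List ℕ) : Prop := ∀ c ∈ C, c ∉ st → ∀ s ∈ st, [s, c] <+ C → c + 1 < s

lemma invB_push {C st : List ℕ} {y : ℕ} (hIB : InvB C st) (hyC : y ∉ C) :
    InvB (C ++ [y]) (y :: st) := by
  intro c hc hcst s hs hsub
  have hcy : c ≠ y := fun h => hcst (h ▸ List.mem_cons_self)
  have hcC : c ∈ C := by
    rcases List.mem_append.1 hc with h | h
    · exact h
    · simp at h; exact absurd h hcy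
  rcases List.mem_cons.1 hs with rfl | hs'
  · exact absurd (snoc_head_sublist hsub hyC) hcy
  · exact hIB c hcC (fun h => hcst (List.mem_cons_of_mem _ h)) s hs' (pair_sublist_snoc hsub hcy)

lemma invB_bypass {C st : List ℕ} {y : ℕ} (hIB : InvB C st) (hyC : y ∉ C)
    (hby : ∀ s ∈ st, y + 1 < s) : InvB (C ++ [y]) st := by
  intro c hc hcst s hs hsub
  by_cases hcy : c = y
  · subst hcy; exact hby s hs
  · have hcC : c ∈ C := by
      rcases List.mem_append.1 hc with h | h
      · exact h
      · simp at h; exact absurd h hcy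
    exact hIB c hcC hcst s hs (pair_sublist_snoc hsub hcy)

lemma invB_pop {C : List ℕ} {y : ℕ} (hyC : y ∉ C) : InvB (C ++ [y]) [y] := by
  intro c hc hcst s hs hsub
  simp at hs
  subst hs
  have := snoc_head_sublist hsub hyC
  simp at hcst
  exact absurd this hcst

lemma exists_max_mem : ∀ {C : List ℕ}, C ≠ [] → ∃ e ∈ C, ∀ d ∈ C, d ≤ e := by
  intro C
  induction C with
  | nil => intro h; exact absurd rfl h
  | cons x C ih =>
    intro _
    cases C with
    | nil => exact ⟨x, by simp, by simp⟩
    | cons z C' =>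
      obtain ⟨e, he1, he2⟩ := ih (by simp)
      by_cases hxe : x ≤ e
      · refine ⟨e, List.mem_cons_of_mem _ he1, ?_⟩
        intro d hd
        rcases List.mem_cons.1 hd with rfl | hd'
        · exact hxe
        · exact he2 d hd'
      · refine ⟨x, List.mem_cons_self, ?_⟩
        intro d hd
        rcases List.mem_cons.1 hd with rfl | hd'
        · exact le_refl d
        · exact le_trans (he2 d hd') (by omega)

lemma pair_decomp {b c : ℕ} {l₁ l₂ : List ℕ} (h : ([b,c] : List ℕ) = l₁ ++ l₂) :
    (l₁ = [] ∧ l₂ = [b,c]) ∨ (l₁ = [b] ∧ l₂ = [c]) ∨ (l₁ = [b,c] ∧ l₂ = []) := by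
  cases l₁ with
  | nil => left; exact ⟨rfl, by simpa using h.symm⟩
  | cons u l₁ =>
    cases l₁ with
    | nil =>
      right; left
      have h1 : b = u := by simpa using congrArg (fun l => l.headI) h
      have h2 : l₂ = [c] := by
        have := congrArg List.tail h
        simpa using this.symm
      exact ⟨by rw [h1], h2⟩
    | cons v l₁ =>
      cases l₁ with
      | nil =>
        right; right
        have h1 : b = u ∧ c = v := by
          have e1 : b = u := by simpa using congrArg (fun l => l.headI) h
          have e2 : c = v := by simpa using congrArg (fun l => l.tail.headI) h
          exact ⟨e1, e2⟩
        cases l₂ with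
        | nil => exact ⟨by rw [h1.1, h1.2], rfl⟩
        | cons w l₂ =>
          have := congrArg List.length h
          simp at this
      | cons u2 l₁ =>
        have := congrArg List.length h
        simp at this

lemma triple_decomp {a b c : ℕ} {l₁ l₂ : List ℕ} (h : ([a,b,c] : List ℕ) = l₁ ++ l₂) :
    (l₁ = [] ∧ l₂ = [a,b,c]) ∨ (l₁ = [a] ∧ l₂ = [b,c]) ∨ (l₁ = [a,b] ∧ l₂ = [c]) ∨
      (l₁ = [a,b,c] ∧ l₂ = []) := by
  cases l₁ with
  | nil => left; exact ⟨rfl, by simpa using h.symm⟩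
  | cons u l₁ =>
    have h' : ([b,c] : List ℕ) = l₁ ++ l₂ := by
      have := h
      simp at this
      exact this.2
    have hu : u = a := by simp at h; exact h.1.symm
    subst hu
    rcases pair_decomp h' with ⟨h1, h2⟩ | ⟨h1, h2⟩ | ⟨h1, h2⟩
    · subst h1; right; left; exact ⟨rfl, h2⟩
    · subst h1; right; right; left; exact ⟨rfl, h2⟩
    · subst h1; right; right; right; exact ⟨rfl, h2⟩

lemma pair_sublist_of_lt_append {out : List ℕ} {α k b c : ℕ}
    (hb : b < α) (h : [b,c] <+ List.range' α k ++ out) : [b,c] <+ out := by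
  rcases List.sublist_append_iff.1 h with ⟨l₁, l₂, heq, h1, h2⟩
  rcases pair_decomp heq with ⟨e1, e2⟩ | ⟨e1, e2⟩ | ⟨e1, e2⟩
  · subst e1; subst e2; exact h2
  · subst e1
    have : b ∈ List.range' α k := h1.subset (by simp)
    have := List.mem_range'_1.1 this
    omega
  · subst e1
    have : b ∈ List.range' α k := h1.subset (by simp)
    have := List.mem_range'_1.1 this
    omega

/-- The core pattern construction: `y` is bypassed now (with witness `w` already
output and `y < w < α`), and a smaller element `c` comes later. -/
lemma corePattern (n : ℕ) (π C rest : List ℕ) (α k w y c : ℕ)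
    (hπ : π ~ List.range' 1 n) (hsplit : π = C ++ y :: rest) (hk : 1 ≤ k)
    (hsubC : ∀ x ∈ List.range' α k, x ∈ C) (hIB : InvB C (List.range' α k))
    (hwC : w ∈ C) (hwα : w < α) (hyw : y < w) (hcrest : c ∈ rest) (hcy : c < y) :
    OccAny π := by
  classical
  -- the maximal already-processed element in [w, α)
  have hLne : C.filter (fun d => decide (w ≤ d ∧ d < α)) ≠ [] := by
    intro hcon
    have : w ∈ C.filter (fun d => decide (w ≤ d ∧ d < α)) := by
      rw [List.mem_filter]
      exact ⟨hwC, by simp; omega⟩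
    rw [hcon] at this
    simp at this
  obtain ⟨e, he1, he2⟩ := exists_max_mem hLne
  rw [List.mem_filter] at he1
  obtain ⟨heC, heP⟩ := he1
  have heP' : w ≤ e ∧ e < α := by simpa using heP
  have hemax : ∀ d ∈ C, w ≤ d → d < α → d ≤ e := by
    intro d hd h1 h2
    exact he2 d (List.mem_filter.2 ⟨hd, by simp; omega⟩)
  have hαst : α ∈ List.range' α k := List.mem_range'_1.2 ⟨le_refl α, by omega⟩
  have hβst : α + k - 1 ∈ List.range' α k := List.mem_range'_1.2 ⟨by omega, by omega⟩
  by_cases hA : ∃ g ∈ List.range' α k, [e, g] <+ C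
  · obtain ⟨g, hgst, hge⟩ := hA
    have hgα := (List.mem_range'_1.1 hgst).1
    left
    refine ⟨e, g, y, c, ?_, hcy, by omega, by omega⟩
    have : [e,g] ++ [y,c] <+ C ++ (y :: rest) :=
      List.Sublist.append hge (List.cons_sublist_cons.2 (List.singleton_sublist.2 hcrest))
    rw [hsplit]
    simpa using this
  · have hge : ∀ g ∈ List.range' α k, [g, e] <+ C := by
      intro g hg
      have hgα := (List.mem_range'_1.1 hg).1
      rcases two_mem_sublist (hsubC g hg) heC with h | h | h
      · omega
      · exact h
      · exact absurd ⟨g, hg, h⟩ hA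
    by_cases heα : e + 1 = α
    · exfalso
      have henotst : e ∉ List.range' α k := by
        intro hc
        have := List.mem_range'_1.1 hc
        omega
      have := hIB e heC henotst α hαst (hge α hαst)
      omega
    · -- z := e + 1 is unprocessed and below the stack
      set z := e + 1 with hz
      have hznotC : z ∉ C := by
        intro hc
        have := hemax z hc (by omega) (by omega)
        omega
      have hβC : α + k - 1 ∈ C := hsubC _ hβst
      have hβn : α + k - 1 < 1 + n := by
        have : α + k - 1 ∈ List.range' 1 n := hπ.mem_iff.1 (by rw [hsplit]; exact List.mem_append.2 (Or.inl hβC))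
        exact (List.mem_range'_1.1 this).2
      have hzπ : z ∈ π := by
        rw [hπ.mem_iff]
        exact List.mem_range'_1.2 ⟨by omega, by omega⟩
      have hzrest : z ∈ rest := by
        rw [hsplit] at hzπ
        rcases List.mem_append.1 hzπ with h | h
        · exact absurd h hznotC
        · rcases List.mem_cons.1 h with h | h
          · omega
          · exact h
      have hβe : [α + k - 1, e] <+ C := hge _ hβst
      rcases two_mem_sublist hzrest hcrest with h | h | h
      · omega
      · -- z before c : pattern 53241
        right; left
        refine ⟨α + k - 1, e, y, z, c, ?_, hcy, by omega, by omega, by omega⟩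
        have : [α + k - 1, e] ++ [y, z, c] <+ C ++ (y :: rest) :=
          List.Sublist.append hβe (List.cons_sublist_cons.2 h)
        rw [hsplit]
        simpa using this
      · -- c before z : pattern 53214
        right; right
        refine ⟨α + k - 1, e, y, c, z, ?_, hcy, by omega, by omega, by omega⟩
        have : [α + k - 1, e] ++ [y, c, z] <+ C ++ (y :: rest) :=
          List.Sublist.append hβe (List.cons_sublist_cons.2 h)
        rw [hsplit]
        simpa using this


lemma lemWD (n w b c : ℕ) (π : List ℕ) (hπ : π ~ List.range' 1 n)
    (hcb : c < b) (hbw : b < w) :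
    ∀ (rest C : List ℕ) (α k : ℕ), 1 ≤ k →
    π = C ++ rest →
    (∀ x ∈ List.range' α k, x ∈ C) →
    InvB C (List.range' α k) →
    w ∈ C → w < α →
    [b,c] <+ psbAux rest (List.range' α k) → OccAny π := by
  have hπnd : π.Nodup := hπ.symm.nodup (List.nodup_range' (s := 1) (n := n))
  intro rest
  induction rest with
  | nil =>
    intro C α k hk hsplit hsubC hIB hwC hwα hsub
    rw [psbAux_nil] at hsub
    have hpw := (List.pairwise_lt_range' (s := α) (n := k)).sublist hsub
    rw [List.pairwise_cons] at hpw
    have := hpw.1 c (by simp)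
    omega
  | cons y rest ih =>
    intro C α k hk hsplit hsubC hIB hwC hwα hsub
    obtain ⟨k', rfl⟩ : ∃ k', k = k' + 1 := ⟨k - 1, by omega⟩
    have hst : List.range' α (k'+1) = α :: List.range' (α+1) k' := List.range'_succ ..
    have hndCR : (C ++ y :: rest).Nodup := by rw [← hsplit]; exact hπnd
    have hyC : y ∉ C := by
      intro hc
      have := (List.perm_middle (a := y) (l₁ := C) (l₂ := rest)).nodup hndCR
      rw [List.nodup_cons] at this
      exact this.1 (List.mem_append.2 (Or.inl hc))
    have hsplit' : π = (C ++ [y]) ++ rest := by rw [hsplit]; simp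
    have hwy : w ≠ y := fun h => hyC (h ▸ hwC)
    have hyst : y ∉ List.range' α (k'+1) := fun h => hyC (hsubC y h)
    rcases Nat.lt_trichotomy (y+1) α with h | h | h
    · -- bypass
      rw [hst, psbAux_bypass _ _ h, ← hst] at hsub
      rcases List.sublist_cons_iff.1 hsub with hs' | ⟨rr, heq, hs0⟩
      · refine ih (C ++ [y]) α (k'+1) hk hsplit' (fun x hx => List.mem_append.2 (Or.inl (hsubC x hx))) ?_ (List.mem_append.2 (Or.inl hwC)) hwα hs'
        refine invB_bypass hIB hyC ?_
        intro s hs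
        have := (List.mem_range'_1.1 hs).1
        omega
      · -- b = y : core construction
        have hyb : y = b := by cases heq; rfl
        subst hyb
        have hrr : rr = [c] := by cases heq; rfl
        subst hrr
        have hcmem : c ∈ psbAux rest (List.range' α (k'+1)) := List.singleton_sublist.1 hs0
        have hcrest : c ∈ rest := by
          rcases mem_psbAux.1 hcmem with h2 | h2
          · exact h2
          · have := (List.mem_range'_1.1 h2).1
            omega
        exact corePattern n π C rest α (k'+1) w y c hπ hsplit hk hsubC hIB hwC hwα hbw hcrest hcb
    · -- push
      rw [hst, psbAux_push _ _ h] at hsub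
      have hst2 : List.range' y (k'+2) = y :: α :: List.range' (α+1) k' := by
        rw [List.range'_succ, h, ← hst]
      rw [← hst2] at hsub
      refine ih (C ++ [y]) y (k'+2) (by omega) hsplit' ?_ ?_ (List.mem_append.2 (Or.inl hwC)) (by omega) hsub
      · intro x hx
        rw [hst2, ← hst] at hx
        rcases List.mem_cons.1 hx with rfl | hx'
        · exact List.mem_append.2 (Or.inr (by simp))
        · exact List.mem_append.2 (Or.inl (hsubC x hx'))
      · have := invB_push hIB hyC
        rw [hst2, ← hst]
        exact this
    · -- pop
      have hymax : α + k' < y := by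
        by_contra hcon
        exact hyst (List.mem_range'_1.2 ⟨by omega, by omega⟩)
      rw [hst, psbAux_pop _ _ h, ← hst] at hsub
      have hsub2 : [b,c] <+ psbAux rest (List.range' y 1) :=
        pair_sublist_of_lt_append (by omega) hsub
      refine ih (C ++ [y]) y 1 (by omega) hsplit' ?_ ?_ (List.mem_append.2 (Or.inl hwC)) (by omega) hsub2
      · intro x hx
        rw [List.range'_one] at hx
        simp at hx
        subst hx
        exact List.mem_append.2 (Or.inr (by simp))
      · rw [List.range'_one]
        exact invB_pop hyC

lemma lemML (n : ℕ) (π : List ℕ) (hπ : π ~ List.range' 1 n) :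
    ∀ (rest C : List ℕ) (α k : ℕ),
    π = C ++ rest →
    (∀ x ∈ List.range' α k, x ∈ C) →
    InvB C (List.range' α k) →
    Des (psbAux rest (List.range' α k)) → OccAny π := by
  have hπnd : π.Nodup := hπ.symm.nodup (List.nodup_range' (s := 1) (n := n))
  intro rest
  induction rest with
  | nil =>
    intro C α k hsplit hsubC hIB hdes
    obtain ⟨a, b2, c, hsub, h1, h2⟩ := hdes
    rw [psbAux_nil] at hsub
    have hpw := (List.pairwise_lt_range' (s := α) (n := k)).sublist hsub
    rw [List.pairwise_cons] at hpw
    have := hpw.1 b2 (by simp)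
    omega
  | cons y rest ih =>
    intro C α k hsplit hsubC hIB hdes
    have hndCR : (C ++ y :: rest).Nodup := by rw [← hsplit]; exact hπnd
    have hyC : y ∉ C := by
      intro hc
      have := (List.perm_middle (a := y) (l₁ := C) (l₂ := rest)).nodup hndCR
      rw [List.nodup_cons] at this
      exact this.1 (List.mem_append.2 (Or.inl hc))
    have hsplit' : π = (C ++ [y]) ++ rest := by rw [hsplit]; simp
    cases k with
    | zero =>
      rw [show List.range' α 0 = [] from rfl] at hdes
      rw [psbAux_cons_nil] at hdes
      refine ih (C ++ [y]) y 1 hsplit' ?_ ?_ ?_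
      · intro x hx
        rw [List.range'_one] at hx
        simp at hx
        subst hx
        exact List.mem_append.2 (Or.inr (by simp))
      · rw [List.range'_one]; exact invB_pop hyC
      · rwa [List.range'_one]
    | succ k' =>
      have hst : List.range' α (k'+1) = α :: List.range' (α+1) k' := List.range'_succ ..
      have hyst : y ∉ List.range' α (k'+1) := fun h => hyC (hsubC y h)
      rcases Nat.lt_trichotomy (y+1) α with h | h | h
      · -- bypass
        rw [hst, psbAux_bypass _ _ h, ← hst] at hdes
        obtain ⟨a, b2, c, hsub, h1, h2⟩ := hdes
        rcases List.sublist_cons_iff.1 hsub with hs' | ⟨rr, heq, hs0⟩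
        · refine ih (C ++ [y]) α (k'+1) hsplit' (fun x hx => List.mem_append.2 (Or.inl (hsubC x hx))) ?_ ⟨a, b2, c, hs', h1, h2⟩
          refine invB_bypass hIB hyC ?_
          intro s hs
          have := (List.mem_range'_1.1 hs).1
          omega
        · have hya : y = a := by cases heq; rfl
          subst hya
          have hrr : rr = [b2, c] := by cases heq; rfl
          subst hrr
          refine lemWD n y b2 c π hπ h2 h1 rest (C ++ [y]) α (k'+1) (by omega) hsplit' (fun x hx => List.mem_append.2 (Or.inl (hsubC x hx))) ?_ (List.mem_append.2 (Or.inr (by simp))) (by omega) hs0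
          refine invB_bypass hIB hyC ?_
          intro s hs
          have := (List.mem_range'_1.1 hs).1
          omega
      · -- push
        rw [hst, psbAux_push _ _ h] at hdes
        have hst2 : List.range' y (k'+2) = y :: α :: List.range' (α+1) k' := by
          rw [List.range'_succ, h, ← hst]
        rw [← hst2] at hdes
        refine ih (C ++ [y]) y (k'+2) hsplit' ?_ ?_ hdes
        · intro x hx
          rw [hst2, ← hst] at hx
          rcases List.mem_cons.1 hx with rfl | hx'
          · exact List.mem_append.2 (Or.inr (by simp))
          · exact List.mem_append.2 (Or.inl (hsubC x hx'))
        · have := invB_push hIB hyC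
          rw [hst2, ← hst]
          exact this
      · -- pop
        have hymax : α + k' < y := by
          by_contra hcon
          exact hyst (List.mem_range'_1.2 ⟨by omega, by omega⟩)
        rw [hst, psbAux_pop _ _ h, ← hst] at hdes
        obtain ⟨a, b2, c, hsub, h1, h2⟩ := hdes
        have hsubC' : ∀ x ∈ List.range' y 1, x ∈ C ++ [y] := by
          intro x hx
          rw [List.range'_one] at hx
          simp at hx
          subst hx
          exact List.mem_append.2 (Or.inr (by simp))
        have hIB' : InvB (C ++ [y]) (List.range' y 1) := by
          rw [List.range'_one]; exact invB_pop hyC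
        rcases List.sublist_append_iff.1 hsub with ⟨l₁, l₂, heq, hl1, hl2⟩
        rcases triple_decomp heq with ⟨e1, e2⟩ | ⟨e1, e2⟩ | ⟨e1, e2⟩ | ⟨e1, e2⟩
        · subst e1; subst e2
          exact ih (C ++ [y]) y 1 hsplit' hsubC' hIB' ⟨a, b2, c, hl2, h1, h2⟩
        · subst e1; subst e2
          have haC : a ∈ C := hsubC a (hl1.subset (by simp))
          have hamax : a ≤ α + k' := by
            have := List.mem_range'_1.1 (hl1.subset (show a ∈ [a] by simp))
            omega
          exact lemWD n a b2 c π hπ h2 h1 rest (C ++ [y]) y 1 (by omega) hsplit' hsubC' hIB' (List.mem_append.2 (Or.inl haC)) (by omega) hl2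
        · subst e1; subst e2
          have hpw := (List.pairwise_lt_range' (s := α) (n := k'+1)).sublist hl1
          rw [List.pairwise_cons] at hpw
          have := hpw.1 b2 (by simp)
          omega
        · subst e1; subst e2
          have hpw := (List.pairwise_lt_range' (s := α) (n := k'+1)).sublist hl1
          rw [List.pairwise_cons] at hpw
          have := hpw.1 b2 (by simp)
          omega

lemma des_occAny {n : ℕ} {π : List ℕ} (hπ : π ~ List.range' 1 n) (h : Des (psb π)) :
    OccAny π := by
  refine lemML n π hπ π [] 0 0 rfl ?_ ?_ h
  · intro x hx; simp at hx
  · intro c hc; simp at hc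


/-! ### Queuesort correctness: sorts exactly the 321-avoiding (nodup) lists -/

lemma qs_nil (q : List ℕ) : queuesortAux [] q = q := rfl

lemma qs_cons_nil (x : ℕ) (xs : List ℕ) : queuesortAux (x :: xs) [] = queuesortAux xs [x] := rfl

lemma qs_enq {x b : ℕ} (xs q : List ℕ) (hb : q.getLast? = some b) (h : b < x) :
    queuesortAux (x :: xs) q = queuesortAux xs (q ++ [x]) := by
  conv_lhs => rw [queuesortAux]
  rw [hb]
  simp [h]

lemma qs_byp {x b : ℕ} (xs q : List ℕ) (hb : q.getLast? = some b) (h : ¬ b < x) :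
    queuesortAux (x :: xs) q =
      q.takeWhile (fun a => decide (a < x)) ++ x :: queuesortAux xs (q.dropWhile (fun a => decide (a < x))) := by
  conv_lhs => rw [queuesortAux]
  rw [hb]
  simp [h]

lemma mem_of_getLast?_eq {l : List ℕ} {b : ℕ} (h : l.getLast? = some b) : b ∈ l := by
  obtain ⟨hne, heq⟩ := List.mem_getLast?_eq_getLast (l := l) (x := b) (by simp [Option.mem_def, h])
  rw [heq]
  exact List.getLast_mem hne

lemma queuesortAux_perm : ∀ (xs q : List ℕ), queuesortAux xs q ~ q ++ xs := by
  intro xs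
  induction xs with
  | nil => intro q; simp [qs_nil]
  | cons x xs ih =>
    intro q
    cases hq : q.getLast? with
    | none =>
      have hqe : q = [] := List.getLast?_eq_none_iff.1 hq
      subst hqe
      rw [qs_cons_nil]
      refine (ih [x]).trans ?_
      simp
    | some b =>
      by_cases h : b < x
      · rw [qs_enq xs q hq h]
        refine (ih _).trans ?_
        simp
      · rw [qs_byp xs q hq h]
        have h1 : queuesortAux xs (q.dropWhile (fun a => decide (a < x))) ~
            q.dropWhile (fun a => decide (a < x)) ++ xs := ih _
        calc q.takeWhile (fun a => decide (a < x)) ++ x :: queuesortAux xs (q.dropWhile (fun a => decide (a < x)))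
            ~ q.takeWhile (fun a => decide (a < x)) ++ x :: (q.dropWhile (fun a => decide (a < x)) ++ xs) :=
              List.Perm.append_left _ (h1.cons x)
          _ ~ q.takeWhile (fun a => decide (a < x)) ++ (q.dropWhile (fun a => decide (a < x)) ++ (x :: xs)) :=
              List.Perm.append_left _ List.perm_middle.symm
          _ = q ++ (x :: xs) := by rw [← List.append_assoc, List.takeWhile_append_dropWhile]

lemma pairwise_le_last {q : List ℕ} {b : ℕ} (hq : List.Pairwise (· < ·) q)
    (hb : q.getLast? = some b) : ∀ a ∈ q, a ≤ b := by
  induction q with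
  | nil => simp at hb
  | cons u q ih =>
    intro a ha
    cases q with
    | nil =>
      simp at hb ha
      omega
    | cons v q' =>
      have hb' : (v :: q').getLast? = some b := by rwa [List.getLast?_cons_cons] at hb
      rcases List.mem_cons.1 ha with rfl | ha'
      · have hbmem : b ∈ v :: q' := mem_of_getLast?_eq hb'
        have := (List.pairwise_cons.1 hq).1 b hbmem
        omega
      · exact ih (List.pairwise_cons.1 hq).2 hb' a ha'

lemma dropWhile_gt {x : ℕ} : ∀ {q : List ℕ}, List.Pairwise (· < ·) q → x ∉ q →
    ∀ d ∈ q.dropWhile (fun a => decide (a < x)), x < d := by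
  intro q
  induction q with
  | nil => simp
  | cons a q ih =>
    intro hq hxq d hd
    rw [List.dropWhile_cons] at hd
    by_cases hax : a < x
    · rw [if_pos (by simpa using hax)] at hd
      exact ih (List.pairwise_cons.1 hq).2 (fun hc => hxq (List.mem_cons_of_mem _ hc)) d hd
    · rw [if_neg (by simpa using hax)] at hd
      rcases List.mem_cons.1 hd with rfl | hd'
      · have : d ≠ x := fun hcon => hxq (by simp [hcon])
        omega
      · have := (List.pairwise_cons.1 hq).1 d hd'
        omega

lemma takeWhile_lt {x a : ℕ} {q : List ℕ} (ha : a ∈ q.takeWhile (fun a => decide (a < x))) :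
    a < x := by
  have := List.mem_takeWhile_imp ha
  simpa using this

lemma lemQ1 : ∀ (rest q : List ℕ), List.Pairwise (· < ·) q → (q ++ rest).Nodup →
    ¬ Des (q ++ rest) → List.Pairwise (· < ·) (queuesortAux rest q) := by
  intro rest
  induction rest with
  | nil =>
    intro q hq _ _
    simpa [qs_nil] using hq
  | cons x rest ih =>
    intro q hq hnd hdes
    cases hqL : q.getLast? with
    | none =>
      have hqe : q = [] := List.getLast?_eq_none_iff.1 hqL
      subst hqe
      rw [qs_cons_nil]
      exact ih [x] (by simp) (by simpa using hnd) (by simpa using hdes)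
    | some b =>
      have hbq : b ∈ q := mem_of_getLast?_eq hqL
      have hdisj := (List.nodup_append.1 hnd).2.2
      have hxq : x ∉ q := fun hx => hdisj _ hx _ List.mem_cons_self rfl
      by_cases hbx : b < x
      · rw [qs_enq rest q hqL hbx]
        refine ih (q ++ [x]) ?_ ?_ ?_
        · rw [List.pairwise_append]
          refine ⟨hq, by simp, ?_⟩
          intro a ha b' hb'
          simp at hb'
          subst hb'
          have := pairwise_le_last hq hqL a ha
          omega
        · rw [List.append_assoc]
          simpa using hnd
        · rw [List.append_assoc]
          simpa using hdes
      · rw [qs_byp rest q hqL hbx]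
        have hxb : x < b := by
          have : x ≠ b := fun hc => hxq (hc ▸ hbq)
          omega
        have hPD : List.Pairwise (· < ·) (q.dropWhile (fun a => decide (a < x))) :=
          hq.sublist (List.dropWhile_sublist _)
        have hDR : q.dropWhile (fun a => decide (a < x)) ++ rest <+ q ++ x :: rest :=
          List.Sublist.append (List.dropWhile_sublist _) (List.sublist_cons_self _ _)
        have hnd2 := hDR.nodup hnd
        have hdes2 : ¬ Des (q.dropWhile (fun a => decide (a < x)) ++ rest) :=
          fun hD2 => hdes (hD2.mono hDR)
        have hrestgt : ∀ yel ∈ rest, x < yel := by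
          intro yel hyel
          by_contra hcon
          push_neg at hcon
          have hne : yel ≠ x := by
            intro hc
            subst hc
            have := (List.nodup_append.1 hnd).2.1
            rw [List.nodup_cons] at this
            exact this.1 hyel
          apply hdes
          refine ⟨b, x, yel, ?_, hxb, by omega⟩
          have : [b] ++ [x, yel] <+ q ++ (x :: rest) :=
            List.Sublist.append (List.singleton_sublist.2 hbq)
              (List.cons_sublist_cons.2 (List.singleton_sublist.2 hyel))
          simpa using this
        have hrec := ih _ hPD hnd2 hdes2
        have hrecgt : ∀ r ∈ queuesortAux rest (q.dropWhile (fun a => decide (a < x))), x < r := by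
          intro r hr
          have hr2 := (queuesortAux_perm rest _).subset hr
          rcases List.mem_append.1 hr2 with hd | hd
          · exact dropWhile_gt hq hxq r hd
          · exact hrestgt r hd
        rw [List.pairwise_append]
        refine ⟨hq.sublist (List.takeWhile_sublist _), ?_, ?_⟩
        · rw [List.pairwise_cons]
          exact ⟨hrecgt, hrec⟩
        · intro a ha b' hb'
          have hax : a < x := takeWhile_lt ha
          rcases List.mem_cons.1 hb' with rfl | hb''
          · exact hax
          · have := hrecgt b' hb''
            omega

lemma lemQ2 : ∀ (rest q : List ℕ), List.Pairwise (· < ·) q → (q ++ rest).Nodup →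
    List.Pairwise (· < ·) (queuesortAux rest q) → ¬ Des (q ++ rest) := by
  intro rest
  induction rest with
  | nil =>
    intro q hq _ _ hdes
    obtain ⟨a, b, c, hsub, h1, h2⟩ := hdes
    rw [List.append_nil] at hsub
    have hpw := hq.sublist hsub
    rw [List.pairwise_cons] at hpw
    have := hpw.1 b (by simp)
    omega
  | cons x rest ih =>
    intro q hq hnd hs
    cases hqL : q.getLast? with
    | none =>
      have hqe : q = [] := List.getLast?_eq_none_iff.1 hqL
      subst hqe
      rw [qs_cons_nil] at hs
      have := ih [x] (by simp) (by simpa using hnd) hs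
      simpa using this
    | some b =>
      have hbq : b ∈ q := mem_of_getLast?_eq hqL
      have hdisj := (List.nodup_append.1 hnd).2.2
      have hxq : x ∉ q := fun hx => hdisj _ hx _ List.mem_cons_self rfl
      by_cases hbx : b < x
      · rw [qs_enq rest q hqL hbx] at hs
        have hq2 : List.Pairwise (· < ·) (q ++ [x]) := by
          rw [List.pairwise_append]
          refine ⟨hq, by simp, ?_⟩
          intro a ha b' hb'
          simp at hb'
          subst hb'
          have := pairwise_le_last hq hqL a ha
          omega
        have := ih (q ++ [x]) hq2 (by rw [List.append_assoc]; simpa using hnd) hs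
        rw [List.append_assoc] at this
        simpa using this
      · rw [qs_byp rest q hqL hbx] at hs
        have hxb : x < b := by
          have : x ≠ b := fun hc => hxq (hc ▸ hbq)
          omega
        have hPD : List.Pairwise (· < ·) (q.dropWhile (fun a => decide (a < x))) :=
          hq.sublist (List.dropWhile_sublist _)
        have hDR : q.dropWhile (fun a => decide (a < x)) ++ rest <+ q ++ x :: rest :=
          List.Sublist.append (List.dropWhile_sublist _) (List.sublist_cons_self _ _)
        have hnd2 := hDR.nodup hnd
        have hsp := List.pairwise_append.1 hs
        have hsRec : List.Pairwise (· < ·) (queuesortAux rest (q.dropWhile (fun a => decide (a < x)))) :=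
          (List.pairwise_cons.1 hsp.2.1).2
        have hxrec : ∀ r ∈ queuesortAux rest (q.dropWhile (fun a => decide (a < x))), x < r :=
          (List.pairwise_cons.1 hsp.2.1).1
        have hxrest : ∀ r ∈ rest, x < r := by
          intro r hr
          exact hxrec r ((queuesortAux_perm rest _).mem_iff.2 (List.mem_append.2 (Or.inr hr)))
        have hIH := ih _ hPD hnd2 hsRec
        intro hdes
        obtain ⟨a, u, v, hsub, h1, h2⟩ := hdes
        rcases List.sublist_append_iff.1 hsub with ⟨l₁, l₂, heq, hl1, hl2⟩
        rcases triple_decomp heq with ⟨e1, e2⟩ | ⟨e1, e2⟩ | ⟨e1, e2⟩ | ⟨e1, e2⟩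
        · subst e1; subst e2
          rcases List.sublist_cons_iff.1 hl2 with hs' | ⟨rr, heq2, hs0⟩
          · exact hIH ⟨a, u, v, hs'.trans (List.sublist_append_right _ _), h1, h2⟩
          · have hxa : x = a := by cases heq2; rfl
            subst hxa
            have hrr : rr = [u, v] := by cases heq2; rfl
            subst hrr
            have hu : u ∈ rest := hs0.subset (by simp)
            have := hxrest u hu
            omega
        · subst e1; subst e2
          have haq : a ∈ q := hl1.subset (by simp)
          rcases List.sublist_cons_iff.1 hl2 with hs' | ⟨rr, heq2, hs0⟩
          · -- [u,v] <+ rest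
            have hu : u ∈ rest := hs'.subset (by simp)
            have hxu := hxrest u hu
            rw [← List.takeWhile_append_dropWhile (p := fun a => decide (a < x)) (l := q)] at haq
            rcases List.mem_append.1 haq with hT | hD
            · have := takeWhile_lt hT
              omega
            · refine hIH ⟨a, u, v, ?_, h1, h2⟩
              have : [a] ++ [u,v] <+ q.dropWhile (fun a => decide (a < x)) ++ rest :=
                List.Sublist.append (List.singleton_sublist.2 hD) hs'
              simpa using this
          · have hxu : x = u := by cases heq2; rfl
            subst hxu
            have hrr : rr = [v] := by cases heq2; rfl
            subst hrr
            have hv : v ∈ rest := hs0.subset (by simp)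
            have := hxrest v hv
            omega
        · subst e1; subst e2
          have hpw := hq.sublist hl1
          rw [List.pairwise_cons] at hpw
          have := hpw.1 u (by simp)
          omega
        · subst e1; subst e2
          have hpw := hq.sublist hl1
          rw [List.pairwise_cons] at hpw
          have := hpw.1 u (by simp)
          omega


end PSBProof


namespace PSBProof

lemma contains_3421_iff (l : List ℕ) : Contains l [3,4,2,1] ↔ Occ3421 l := by
  constructor
  · rintro ⟨τ, hsub, hlen, hiso⟩
    obtain ⟨p, q, r, s, rfl⟩ : ∃ p q r s, τ = [p,q,r,s] := by
      cases τ with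
      | nil => simp at hlen
      | cons p τ => cases τ with
        | nil => simp at hlen
        | cons q τ => cases τ with
          | nil => simp at hlen
          | cons r τ => cases τ with
            | nil => simp at hlen
            | cons s τ => cases τ with
              | nil => exact ⟨p,q,r,s,rfl⟩
              | cons t τ => simp at hlen
    refine ⟨p, q, r, s, hsub, ?_, ?_, ?_⟩
    · have := (hiso 3 2 (by simp) (by simp)).2 (by simp)
      simpa using this
    · have := (hiso 2 0 (by simp) (by simp)).2 (by simp)
      simpa using this
    · have := (hiso 0 1 (by simp) (by simp)).2 (by simp)
      simpa using this
  · rintro ⟨p,q,r,s,hsub,h1,h2,h3⟩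
    refine ⟨[p,q,r,s], hsub, by simp, ?_⟩
    intro i j hi hj
    simp only [List.length_cons, List.length_nil] at hi hj
    interval_cases i <;> interval_cases j <;> simp <;> omega

lemma contains_53241_iff (l : List ℕ) : Contains l [5,3,2,4,1] ↔ Occ53241 l := by
  constructor
  · rintro ⟨τ, hsub, hlen, hiso⟩
    obtain ⟨p, q, r, s, t, rfl⟩ : ∃ p q r s t, τ = [p,q,r,s,t] := by
      cases τ with
      | nil => simp at hlen
      | cons p τ => cases τ with
        | nil => simp at hlen
        | cons q τ => cases τ with
          | nil => simp at hlen
          | cons r τ => cases τ with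
            | nil => simp at hlen
            | cons s τ => cases τ with
              | nil => simp at hlen
              | cons t τ => cases τ with
                | nil => exact ⟨p,q,r,s,t,rfl⟩
                | cons u τ => simp at hlen
    refine ⟨p, q, r, s, t, hsub, ?_, ?_, ?_, ?_⟩
    · have := (hiso 4 2 (by simp) (by simp)).2 (by simp)
      simpa using this
    · have := (hiso 2 1 (by simp) (by simp)).2 (by simp)
      simpa using this
    · have := (hiso 1 3 (by simp) (by simp)).2 (by simp)
      simpa using this
    · have := (hiso 3 0 (by simp) (by simp)).2 (by simp)
      simpa using this
  · rintro ⟨p,q,r,s,t,hsub,h1,h2,h3,h4⟩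
    refine ⟨[p,q,r,s,t], hsub, by simp, ?_⟩
    intro i j hi hj
    simp only [List.length_cons, List.length_nil] at hi hj
    interval_cases i <;> interval_cases j <;> simp <;> omega

lemma contains_53214_iff (l : List ℕ) : Contains l [5,3,2,1,4] ↔ Occ53214 l := by
  constructor
  · rintro ⟨τ, hsub, hlen, hiso⟩
    obtain ⟨p, q, r, s, t, rfl⟩ : ∃ p q r s t, τ = [p,q,r,s,t] := by
      cases τ with
      | nil => simp at hlen
      | cons p τ => cases τ with
        | nil => simp at hlen
        | cons q τ => cases τ with
          | nil => simp at hlen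
          | cons r τ => cases τ with
            | nil => simp at hlen
            | cons s τ => cases τ with
              | nil => simp at hlen
              | cons t τ => cases τ with
                | nil => exact ⟨p,q,r,s,t,rfl⟩
                | cons u τ => simp at hlen
    refine ⟨p, q, r, s, t, hsub, ?_, ?_, ?_, ?_⟩
    · have := (hiso 3 2 (by simp) (by simp)).2 (by simp)
      simpa using this
    · have := (hiso 2 1 (by simp) (by simp)).2 (by simp)
      simpa using this
    · have := (hiso 1 4 (by simp) (by simp)).2 (by simp)
      simpa using this
    · have := (hiso 4 0 (by simp) (by simp)).2 (by simp)
      simpa using this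
  · rintro ⟨p,q,r,s,t,hsub,h1,h2,h3,h4⟩
    refine ⟨[p,q,r,s,t], hsub, by simp, ?_⟩
    intro i j hi hj
    simp only [List.length_cons, List.length_nil] at hi hj
    interval_cases i <;> interval_cases j <;> simp <;> omega

end PSBProof

open List in
lemma PSBProof.main_iff (n : ℕ) (π : List ℕ) (hπ : IsPermList n π) :
    queuesort (psb π) = List.range' 1 n ↔
      Avoids π [3, 4, 2, 1] ∧ Avoids π [5, 3, 2, 4, 1] ∧ Avoids π [5, 3, 2, 1, 4] := by
  have hπ' : π ~ List.range' 1 n := hπ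
  have hπnd : π.Nodup := hπ'.symm.nodup (List.nodup_range' (s := 1) (n := n))
  have hψ : psb π ~ π := by
    have := PSBProof.psbAux_perm π []
    simpa [psb] using this
  have hψnd : (psb π).Nodup := hψ.symm.nodup hπnd
  have hq : queuesort (psb π) ~ List.range' 1 n := by
    have h0 := PSBProof.queuesortAux_perm (psb π) []
    rw [List.nil_append] at h0
    exact h0.trans (hψ.trans hπ')
  haveI : IsAntisymm ℕ (· < ·) := ⟨fun a b h1 h2 => absurd h1 (by omega)⟩
  have key1 : queuesort (psb π) = List.range' 1 n ↔ ¬ PSBProof.Des (psb π) := by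
    constructor
    · intro h
      have hpw : List.Pairwise (· < ·) (queuesortAux (psb π) []) := by
        rw [show queuesortAux (psb π) [] = queuesort (psb π) from rfl, h]
        exact List.pairwise_lt_range' (s := 1) (n := n)
      have := PSBProof.lemQ2 (psb π) [] (by simp) (by simpa using hψnd) hpw
      simpa using this
    · intro h
      have hs := PSBProof.lemQ1 (psb π) [] (by simp) (by simpa using hψnd) (by simpa using h)
      exact List.Perm.eq_of_pairwise (fun a b _ _ h1 h2 => by omega) hs (List.pairwise_lt_range' (s := 1) (n := n)) hq
  have key2 : PSBProof.Des (psb π) ↔ PSBProof.OccAny π :=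
    ⟨fun h => PSBProof.des_occAny hπ' h, fun h => PSBProof.occAny_des hπnd h⟩
  rw [key1, key2]
  rw [show Avoids π [3,4,2,1] = ¬ Contains π [3,4,2,1] from rfl]
  rw [show Avoids π [5,3,2,4,1] = ¬ Contains π [5,3,2,4,1] from rfl]
  rw [show Avoids π [5,3,2,1,4] = ¬ Contains π [5,3,2,1,4] from rfl]
  rw [PSBProof.contains_3421_iff, PSBProof.contains_53241_iff, PSBProof.contains_53214_iff]
  unfold PSBProof.OccAny
  tauto



theorem queuesort_psb_sorts_iff (n : ℕ) (π : List ℕ) (hπ : IsPermList n π) :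
    queuesort (psb π) = List.range' 1 n ↔
      Avoids π [3, 4, 2, 1] ∧ Avoids π [5, 3, 2, 4, 1] ∧ Avoids π [5, 3, 2, 1, 4] :=
  PSBProof.main_iff n π hπ
end
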